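/- arXiv:2107.08889 — 4 statements merged into one kernel-verified Lean document; each statement's English description precedes it below -/
import Mathlib

section
/- Let n ≥ 2, let α = (α_{ij}) be real parameters indexed by wedges with α_{ij} ≥ 0 for all wedges, and h = (h_i) arbitrary real parameters indexed by edges. Then for any subsets Λ ⊆ A ⊆ B ⊆ E_n, the expectation of x_Λ := Π_{i∈Λ} x_i is monotone in the volume: E_{A;α,h}(x_Λ) ≤ E_{B;α,h}(x_Λ). -/
open Finset

/-- Edges of the complete graph on `n` labeled vertices. -/
def Edge (n : ℕ) : Type := {e : Sym2 (Fin n) // ¬ e.IsDiag}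

instance (n : ℕ) : Fintype (Edge n) := by unfold Edge; infer_instance
instance (n : ℕ) : DecidableEq (Edge n) := by unfold Edge; infer_instance

/-- Two distinct edges are neighbors (they form a wedge) when they share a vertex. -/
def EdgeAdj {n : ℕ} (i j : Edge n) : Prop := i ≠ j ∧ ∃ v, v ∈ i.1 ∧ v ∈ j.1

instance {n : ℕ} (i j : Edge n) : Decidable (EdgeAdj i j) := by
  unfold EdgeAdj; infer_instance

/-- Hamiltonian `H_{n;α,h}(x) = (1/n) Σ_{{i,j} ∈ W_n} α_{ij} x_i x_j + Σ_i h_i x_i`,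
where the sum over unordered wedges of the symmetric collection `α` is written as
half of the sum over ordered adjacent pairs. -/
noncomputable def Ham (n : ℕ) (α : Edge n → Edge n → ℝ) (h : Edge n → ℝ)
    (x : Edge n → Fin 2) : ℝ :=
  (1 / (2 * (n : ℝ))) * ∑ i : Edge n, ∑ j : Edge n,
      (if EdgeAdj i j then α i j * ((x i : ℕ) : ℝ) * ((x j : ℕ) : ℝ) else 0)
    + ∑ i : Edge n, h i * ((x i : ℕ) : ℝ)

/-- Partition function. -/
noncomputable def Zpart (n : ℕ) (α : Edge n → Edge n → ℝ) (h : Edge n → ℝ) : ℝ :=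
  ∑ x : Edge n → Fin 2, Real.exp (Ham n α h x)

/-- Gibbs measure. -/
noncomputable def gibbs (n : ℕ) (α : Edge n → Edge n → ℝ) (h : Edge n → ℝ)
    (x : Edge n → Fin 2) : ℝ :=
  Real.exp (Ham n α h x) / Zpart n α h

/-- Expectation with respect to the Gibbs measure. -/
noncomputable def expect (n : ℕ) (α : Edge n → Edge n → ℝ) (h : Edge n → ℝ)
    (f : (Edge n → Fin 2) → ℝ) : ℝ :=
  ∑ x : Edge n → Fin 2, f x * gibbs n α h x

/-- `x_C = Π_{i ∈ C} x_i`. -/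
def prodOn {n : ℕ} (C : Finset (Edge n)) (x : Edge n → Fin 2) : ℝ :=
  ∏ i ∈ C, ((x i : ℕ) : ℝ)

/-- Restricted Hamiltonian on a subset `A` of edges. -/
noncomputable def HamR (n : ℕ) (A : Finset (Edge n)) (α : Edge n → Edge n → ℝ)
    (h : Edge n → ℝ) (x : Edge n → Fin 2) : ℝ :=
  (1 / (2 * (n : ℝ))) * ∑ i ∈ A, ∑ j ∈ A,
      (if EdgeAdj i j then α i j * ((x i : ℕ) : ℝ) * ((x j : ℕ) : ℝ) else 0)
    + ∑ i ∈ A, h i * ((x i : ℕ) : ℝ)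

/-- The copy of `{0,1}^A` inside `{0,1}^{E_n}`: configurations vanishing outside `A`. -/
def confR (n : ℕ) (A : Finset (Edge n)) : Finset (Edge n → Fin 2) :=
  Finset.univ.filter (fun x => ∀ i ∉ A, x i = 0)

/-- Restricted partition function `Z_{A;α,h}`. -/
noncomputable def ZR (n : ℕ) (A : Finset (Edge n)) (α : Edge n → Edge n → ℝ)
    (h : Edge n → ℝ) : ℝ :=
  ∑ x ∈ confR n A, Real.exp (HamR n A α h x)

/-- Restricted expectation `E_{A;α,h}`. -/
noncomputable def expectR (n : ℕ) (A : Finset (Edge n)) (α : Edge n → Edge n → ℝ)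
    (h : Edge n → ℝ) (f : (Edge n → Fin 2) → ℝ) : ℝ :=
  (∑ x ∈ confR n A, f x * Real.exp (HamR n A α h x)) / ZR n A α h

/-!
Extend the Gibbs weights of `A` and of `B` by zero to all of `{0,1}^{E_n}`. For `α ≥ 0` the
Hamiltonian is supermodular, and `H_B = H_A` on configurations vanishing outside `A`; together
these give Holley's condition `w_A(a) w_B(b) ≤ w_A(a ⊓ b) w_B(a ⊔ b)`. Holley's inequality then
compares the expectations of the increasing function `x_Λ`.
-/

lemma apply_inf_add_apply_sup {ι β : Type*} [LinearOrder ι] [AddCommMagma β] (v : ι → β)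
    (p q : ι) : v (p ⊓ q) + v (p ⊔ q) = v p + v q := by
  rcases le_total p q with hpq | hqp
  · rw [inf_eq_left.2 hpq, sup_eq_right.2 hpq]
  · rw [inf_eq_right.2 hqp, sup_eq_left.2 hqp, add_comm]

lemma Monotone.mul_add_mul_le_inf_sup {ι : Type*} [LinearOrder ι] {v : ι → ℝ} (hv : Monotone v)
    (p q r s : ι) :
    v p * v r + v q * v s ≤ v (p ⊓ q) * v (r ⊓ s) + v (p ⊔ q) * v (r ⊔ s) := by
  rcases le_total p q with hpq | hqp <;> rcases le_total r s with hrs | hsr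
  · simp [hpq, hrs]
  · simp only [inf_eq_left.2 hpq, sup_eq_right.2 hpq, inf_eq_right.2 hsr, sup_eq_left.2 hsr]
    nlinarith [hv hpq, hv hsr]
  · simp only [inf_eq_right.2 hqp, sup_eq_left.2 hqp, inf_eq_left.2 hrs, sup_eq_right.2 hrs]
    nlinarith [hv hqp, hv hrs]
  · simp only [inf_eq_right.2 hqp, sup_eq_left.2 hqp, inf_eq_right.2 hsr, sup_eq_left.2 hsr]
    linarith

lemma holley_div {ι : Type*} [DistribLattice ι] [Fintype ι] {μ f g : ι → ℝ}
    (hμ₀ : 0 ≤ μ) (hμ : Monotone μ) (hf : 0 ≤ f) (hg : 0 ≤ g)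
    (hf_sum : 0 < ∑ a, f a) (hg_sum : 0 < ∑ a, g a)
    (hfg : ∀ a b, f a * g b ≤ f (a ⊓ b) * g (a ⊔ b)) :
    (∑ a, μ a * f a) / ∑ a, f a ≤ (∑ a, μ a * g a) / ∑ a, g a := by
  set F := ∑ a, f a
  set G := ∑ a, g a
  have key := holley (fun a => f a / F) (fun a => g a / G) μ hμ₀
    (fun a => div_nonneg (hf a) hf_sum.le) (fun a => div_nonneg (hg a) hg_sum.le) hμ
    (by rw [← sum_div, ← sum_div, div_self hf_sum.ne', div_self hg_sum.ne'])
    (fun a b => by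
      rw [div_mul_div_comm, div_mul_div_comm]
      exact div_le_div_of_nonneg_right (hfg a b) (mul_pos hf_sum hg_sum).le)
  simpa only [mul_div_assoc', ← sum_div] using key

section GibbsWeight

variable {n : ℕ}

lemma prodOn_nonneg (Λ : Finset (Edge n)) : 0 ≤ prodOn Λ :=
  fun _ => prod_nonneg fun _ _ => Nat.cast_nonneg _

lemma prodOn_mono (Λ : Finset (Edge n)) : Monotone (prodOn Λ) :=
  fun _ _ hab => prod_le_prod (fun _ _ => Nat.cast_nonneg _) fun i _ => by exact_mod_cast hab i

lemma mem_confR {A : Finset (Edge n)} {x : Edge n → Fin 2} :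
    x ∈ confR n A ↔ ∀ i ∉ A, x i = 0 := by
  simp [confR]

lemma confR_mono {A B : Finset (Edge n)} (hAB : A ⊆ B) : confR n A ⊆ confR n B :=
  fun _ hx => mem_confR.2 fun i hi => mem_confR.1 hx i fun hiA => hi (hAB hiA)

lemma inf_mem_confR {A : Finset (Edge n)} {a : Edge n → Fin 2} (ha : a ∈ confR n A)
    (b : Edge n → Fin 2) : a ⊓ b ∈ confR n A :=
  mem_confR.2 fun i hi => by simp [mem_confR.1 ha i hi]

lemma sup_mem_confR {A : Finset (Edge n)} {a b : Edge n → Fin 2} (ha : a ∈ confR n A)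
    (hb : b ∈ confR n A) : a ⊔ b ∈ confR n A :=
  mem_confR.2 fun i hi => by simp [mem_confR.1 ha i hi, mem_confR.1 hb i hi]

lemma hamR_add_le_inf_add_sup (A : Finset (Edge n)) {α : Edge n → Edge n → ℝ}
    (h : Edge n → ℝ) (hα : ∀ i j, EdgeAdj i j → 0 ≤ α i j) (a b : Edge n → Fin 2) :
    HamR n A α h a + HamR n A α h b ≤ HamR n A α h (a ⊓ b) + HamR n A α h (a ⊔ b) := by
  simp only [HamR]
  set v : Fin 2 → ℝ := fun p => ((p : ℕ) : ℝ)
  have hv : Monotone v := fun p q hpq => by simpa [v] using hpq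
  have hpair : ∀ i j,
      (if EdgeAdj i j then α i j * v (a i) * v (a j) else 0) +
          (if EdgeAdj i j then α i j * v (b i) * v (b j) else 0) ≤
        (if EdgeAdj i j then α i j * v ((a ⊓ b) i) * v ((a ⊓ b) j) else 0) +
          (if EdgeAdj i j then α i j * v ((a ⊔ b) i) * v ((a ⊔ b) j) else 0) := by
    intro i j
    split_ifs with hij
    · simp only [mul_assoc, ← mul_add, Pi.inf_apply, Pi.sup_apply]
      exact mul_le_mul_of_nonneg_left (hv.mul_add_mul_le_inf_sup _ _ _ _) (hα i j hij)
    · simp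
  have hlin : ∀ i, h i * v ((a ⊓ b) i) + h i * v ((a ⊔ b) i) = h i * v (a i) + h i * v (b i) :=
    fun i => by rw [← mul_add, ← mul_add, Pi.inf_apply, Pi.sup_apply, apply_inf_add_apply_sup]
  have hquad := sum_le_sum fun i (_ : i ∈ A) => sum_le_sum fun j (_ : j ∈ A) => hpair i j
  have hlin_sum := sum_congr rfl fun i (_ : i ∈ A) => hlin i
  simp only [sum_add_distrib] at hquad hlin_sum
  have hc : (0 : ℝ) ≤ 1 / (2 * n) := by positivity
  linarith [mul_le_mul_of_nonneg_left hquad hc]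

lemma hamR_eq_of_mem_confR {A B : Finset (Edge n)} (hAB : A ⊆ B) (α : Edge n → Edge n → ℝ)
    (h : Edge n → ℝ) {x : Edge n → Fin 2} (hx : x ∈ confR n A) :
    HamR n B α h x = HamR n A α h x := by
  have hx0 : ∀ i ∉ A, ((x i : ℕ) : ℝ) = 0 := fun i hi => by simp [mem_confR.1 hx i hi]
  simp only [HamR]
  congr 1
  · rw [← sum_subset hAB fun i _ hi => sum_eq_zero fun j _ => by simp [hx0 i hi]]
    exact congrArg _ <| sum_congr rfl fun i _ =>
      (sum_subset hAB fun j _ hj => by simp [hx0 j hj]).symm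
  · exact (sum_subset hAB fun i _ hi => by simp [hx0 i hi]).symm

noncomputable def weightR (n : ℕ) (A : Finset (Edge n)) (α : Edge n → Edge n → ℝ)
    (h : Edge n → ℝ) (x : Edge n → Fin 2) : ℝ :=
  if x ∈ confR n A then Real.exp (HamR n A α h x) else 0

variable (A : Finset (Edge n)) (α : Edge n → Edge n → ℝ) (h : Edge n → ℝ)

lemma weightR_nonneg : 0 ≤ weightR n A α h := fun x => by
  unfold weightR; split_ifs <;> positivity

lemma sum_weightR_pos : 0 < ∑ x, weightR n A α h x :=
  calc 0 < weightR n A α h 0 := by simp [weightR, mem_confR, Real.exp_pos]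
    _ ≤ ∑ x, weightR n A α h x := single_le_sum (fun x _ => weightR_nonneg A α h x) (mem_univ 0)

lemma expectR_eq_div_sum_weightR (f : (Edge n → Fin 2) → ℝ) :
    expectR n A α h f = (∑ x, f x * weightR n A α h x) / ∑ x, weightR n A α h x := by
  simp only [expectR, ZR, weightR, mul_ite, mul_zero, sum_ite_mem, univ_inter]

variable {A α}

lemma weightR_mul_le_inf_mul_sup {B : Finset (Edge n)} (hAB : A ⊆ B)
    (hα : ∀ i j, EdgeAdj i j → 0 ≤ α i j) (a b : Edge n → Fin 2) :
    weightR n A α h a * weightR n B α h b ≤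
      weightR n A α h (a ⊓ b) * weightR n B α h (a ⊔ b) := by
  have hRHS := mul_nonneg (weightR_nonneg A α h (a ⊓ b)) (weightR_nonneg B α h (a ⊔ b))
  by_cases ha : a ∈ confR n A
  swap
  · simpa [weightR, ha] using hRHS
  by_cases hb : b ∈ confR n B
  swap
  · simpa [weightR, hb] using hRHS
  have hinf := inf_mem_confR ha b
  have hsup := sup_mem_confR (confR_mono hAB ha) hb
  simp only [weightR, if_pos ha, if_pos hb, if_pos hinf, if_pos hsup, ← Real.exp_add,
    Real.exp_le_exp, ← hamR_eq_of_mem_confR hAB α h ha, ← hamR_eq_of_mem_confR hAB α h hinf]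
  exact hamR_add_le_inf_add_sup B h hα a b

end GibbsWeight

theorem expect_monotone_volume_general (n : ℕ)
    (Λ A B : Finset (Edge n)) (hAB : A ⊆ B)
    (α : Edge n → Edge n → ℝ) (h : Edge n → ℝ)
    (hα : ∀ i j, EdgeAdj i j → 0 ≤ α i j) :
    expectR n A α h (prodOn Λ) ≤ expectR n B α h (prodOn Λ) := by
  rw [expectR_eq_div_sum_weightR, expectR_eq_div_sum_weightR]
  exact holley_div (prodOn_nonneg Λ) (prodOn_mono Λ) (weightR_nonneg A α h)
    (weightR_nonneg B α h) (sum_weightR_pos A α h) (sum_weightR_pos B α h)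
    (weightR_mul_le_inf_mul_sup h hAB hα)

/-- Lemma 3.8, monotonicity in the volume: if `α ≥ 0` on wedges, then
for `Λ ⊆ A ⊆ B ⊆ E_n` one has `E_{A;α,h}(x_Λ) ≤ E_{B;α,h}(x_Λ)`. -/
theorem expect_monotone_volume (n : ℕ) (hn : 2 ≤ n)
    (Λ A B : Finset (Edge n)) (hΛA : Λ ⊆ A) (hAB : A ⊆ B)
    (α : Edge n → Edge n → ℝ) (h : Edge n → ℝ)
    (hsym : ∀ i j, α i j = α j i)
    (hα : ∀ i j, EdgeAdj i j → 0 ≤ α i j) :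
    expectR n A α h (prodOn Λ) ≤ expectR n B α h (prodOn Λ) :=
  expect_monotone_volume_general n Λ A B hAB α h hα
end

section
/- Let n ≥ 2, let α = (α_{ij}) be real parameters indexed by wedges and h = (h_i) real parameters indexed by edges, with α_{ij} ≥ 0 for all wedges and h_i ≥ 0 for all edges. Then the Gibbs measure μ_{n;α,h} satisfies the GHS inequality: for all edges i, j, k ∈ E_n, E_{n;α,h}(x_i x_j x_k) − E_{n;α,h}(x_i) E_{n;α,h}(x_j x_k) − E_{n;α,h}(x_j) E_{n;α,h}(x_i x_k) − E_{n;α,h}(x_k) E_{n;α,h}(x_i x_j) + 2 E_{n;α,h}(x_i) E_{n;α,h}(x_j) E_{n;α,h}(x_k) ≤ 0. -/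
set_option linter.unusedSectionVars false
set_option maxHeartbeats 1000000

open Finset

namespace GHSaux

abbrev KK : Type := Fin 2 × Fin 2 × Fin 2 × Fin 2

def vl (v : Fin 2) : ℝ := ((v : ℕ) : ℝ)

def vA (v : KK) : ℝ := vl v.1 + vl v.2.1 + vl v.2.2.1 + vl v.2.2.2
def vB (v : KK) : ℝ := vl v.1 + vl v.2.1 - vl v.2.2.1 - vl v.2.2.2
def vC (v : KK) : ℝ := vl v.1 - vl v.2.1 + vl v.2.2.1 - vl v.2.2.2
def vD (v : KK) : ℝ := vl v.1 - vl v.2.1 - vl v.2.2.1 + vl v.2.2.2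

noncomputable def Mm (a b c d : ℕ) : ℝ :=
  ∑ v : KK, vA v ^ a * vB v ^ b * vC v ^ c * vD v ^ d

lemma Mm_eq (a b c d : ℕ) : Mm a b c d =
      (0:ℝ)^a * 0^b * 0^c * 0^d
    + 1^a * (-1:ℝ)^b * (-1:ℝ)^c * 1^d
    + 1^a * (-1:ℝ)^b * 1^c * (-1:ℝ)^d
    + 2^a * (-2:ℝ)^b * 0^c * 0^d
    + 1^a * 1^b * (-1:ℝ)^c * (-1:ℝ)^d
    + 2^a * 0^b * (-2:ℝ)^c * 0^d
    + 2^a * 0^b * 0^c * (-2:ℝ)^d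
    + 3^a * (-1:ℝ)^b * (-1:ℝ)^c * (-1:ℝ)^d
    + 1^a * 1^b * 1^c * 1^d
    + 2^a * 0^b * 0^c * 2^d
    + 2^a * 0^b * 2^c * 0^d
    + 3^a * (-1:ℝ)^b * 1^c * 1^d
    + 2^a * 2^b * 0^c * 0^d
    + 3^a * 1^b * (-1:ℝ)^c * 1^d
    + 3^a * 1^b * 1^c * (-1:ℝ)^d
    + 4^a * 0^b * 0^c * 0^d := by
  simp only [Mm, Fintype.sum_prod_type, Fin.sum_univ_two, vA, vB, vC, vD, vl]
  norm_num
  ring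

lemma Mm_nonneg {a b c d : ℕ} (hb : Even b) (hc : Even c) (hd : Even d) :
    0 ≤ Mm a b c d := by
  refine Finset.sum_nonneg fun v _ => ?_
  have hA : 0 ≤ vA v := by
    have : ∀ u : Fin 2, 0 ≤ vl u := fun u => Nat.cast_nonneg _
    have h1 := this v.1; have h2 := this v.2.1; have h3 := this v.2.2.1
    have h4 := this v.2.2.2
    unfold vA; linarith
  have h1 := hb.pow_nonneg (vB v)
  have h2 := hc.pow_nonneg (vC v)
  have h3 := hd.pow_nonneg (vD v)
  have h0 : 0 ≤ vA v ^ a := pow_nonneg hA a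
  have := mul_nonneg (mul_nonneg (mul_nonneg h0 h1) h2) h3
  linarith

lemma Mm_nonpos {a b c d : ℕ} (hb : Odd b) (hc : Odd c) (hd : Odd d) :
    Mm a b c d ≤ 0 := by
  have hb0 : b ≠ 0 := hb.pos.ne'
  have hc0 : c ≠ 0 := hc.pos.ne'
  have hd0 : d ≠ 0 := hd.pos.ne'
  rw [Mm_eq]
  rw [zero_pow hb0, zero_pow hc0, zero_pow hd0, hb.neg_one_pow, hc.neg_one_pow,
    hd.neg_one_pow]
  have h3 : (1:ℝ) ≤ 3^a := one_le_pow₀ (by norm_num)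
  ring_nf
  nlinarith [h3]

lemma Mm_swap (a b c d : ℕ) : Mm a b c d = Mm a c b d := by
  rw [Mm_eq, Mm_eq]; ring

lemma Mm_zero_bd {a b c d : ℕ} (hbd : ¬ (Odd b ↔ Odd d)) : Mm a b c d = 0 := by
  rw [Mm_eq]
  rcases Nat.even_or_odd b with hb | hb
  · have hd : Odd d := by
      rcases Nat.even_or_odd d with hd | hd
      · exact absurd (iff_of_false (by simpa [Nat.not_odd_iff_even] using hb)
          (by simpa [Nat.not_odd_iff_even] using hd)) hbd
      · exact hd
    rw [zero_pow hd.pos.ne', hb.neg_one_pow, hd.neg_one_pow, hb.neg_pow, hd.neg_pow]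
    ring
  · have hd : Even d := by
      rcases Nat.even_or_odd d with hd | hd
      · exact hd
      · exact absurd (iff_of_true hb hd) hbd
    rw [zero_pow hb.pos.ne', hb.neg_one_pow, hd.neg_one_pow, hb.neg_pow, hd.neg_pow]
    ring

lemma Mm_zero_cd {a b c d : ℕ} (hcd : ¬ (Odd c ↔ Odd d)) : Mm a b c d = 0 := by
  rw [Mm_swap]; exact Mm_zero_bd hcd

lemma prod_Mm_nonpos {ι : Type*} [Fintype ι] [DecidableEq ι] (e : ι → ℕ × ℕ × ℕ × ℕ)
    (hd : Odd (∑ s, (e s).2.2.2)) :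
    ∏ s : ι, Mm (e s).1 (e s).2.1 (e s).2.2.1 (e s).2.2.2 ≤ 0 := by
  by_cases hpure : ∀ s, (Odd (e s).2.1 ↔ Odd (e s).2.2.2) ∧
      (Odd (e s).2.2.1 ↔ Odd (e s).2.2.2)
  · set O : Finset ι := univ.filter (fun s => Odd (e s).2.2.2) with hO
    have hcard : Odd O.card := by
      have h1 : (∑ s, (e s).2.2.2) % 2 = (∑ s : ι, (e s).2.2.2 % 2) % 2 :=
        Finset.sum_nat_mod _ _ _
      have h2 : ∑ s : ι, (e s).2.2.2 % 2 = ∑ s : ι, (if Odd (e s).2.2.2 then 1 else 0) := by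
        refine Finset.sum_congr rfl fun s _ => ?_
        rcases Nat.even_or_odd (e s).2.2.2 with h | h
        · simp [Nat.even_iff.mp h, Nat.not_odd_iff_even.mpr h]
        · simp [Nat.odd_iff.mp h, h]
      have h3 : (∑ s : ι, if Odd (e s).2.2.2 then (1:ℕ) else 0) = O.card := by
        rw [hO]; simp [Finset.sum_boole]
      rw [Nat.odd_iff] at hd ⊢
      rw [h1, h2, h3] at hd
      omega
    rw [← Finset.prod_filter_mul_prod_filter_not univ (fun s => Odd (e s).2.2.2)]
    have hneg : ∀ s ∈ O, Mm (e s).1 (e s).2.1 (e s).2.2.1 (e s).2.2.2 ≤ 0 := by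
      intro s hs
      rw [hO, Finset.mem_filter] at hs
      exact Mm_nonpos ((hpure s).1.mpr hs.2) ((hpure s).2.mpr hs.2) hs.2
    have h1 : ∏ s ∈ O, Mm (e s).1 (e s).2.1 (e s).2.2.1 (e s).2.2.2 ≤ 0 := by
      have hmain : ∏ s ∈ O, (-(Mm (e s).1 (e s).2.1 (e s).2.2.1 (e s).2.2.2)) =
          (-1)^O.card * ∏ s ∈ O, Mm (e s).1 (e s).2.1 (e s).2.2.1 (e s).2.2.2 := by
        rw [← Finset.prod_const, ← Finset.prod_mul_distrib]
        exact Finset.prod_congr rfl fun _ _ => by ring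
      have hnn : 0 ≤ ∏ s ∈ O, (-(Mm (e s).1 (e s).2.1 (e s).2.2.1 (e s).2.2.2)) :=
        Finset.prod_nonneg fun s hs => neg_nonneg.mpr (hneg s hs)
      rw [hmain, hcard.neg_one_pow] at hnn
      linarith
    have h2 : 0 ≤ ∏ s ∈ univ.filter (fun s => ¬ Odd (e s).2.2.2),
        Mm (e s).1 (e s).2.1 (e s).2.2.1 (e s).2.2.2 := by
      refine Finset.prod_nonneg fun s hs => ?_
      rw [Finset.mem_filter, Nat.not_odd_iff_even] at hs
      refine Mm_nonneg ?_ ?_ hs.2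
      · rw [← Nat.not_odd_iff_even]
        exact fun hodd => (Nat.not_odd_iff_even.mpr hs.2) ((hpure s).1.mp hodd)
      · rw [← Nat.not_odd_iff_even]
        exact fun hodd => (Nat.not_odd_iff_even.mpr hs.2) ((hpure s).2.mp hodd)
    exact mul_nonpos_of_nonpos_of_nonneg h1 h2
  · rw [not_forall] at hpure
    obtain ⟨s, hs⟩ := hpure
    rw [not_and_or] at hs
    have hzero : Mm (e s).1 (e s).2.1 (e s).2.2.1 (e s).2.2.2 = 0 :=
      hs.elim (fun hb => Mm_zero_bd hb) (fun hc => Mm_zero_cd hc)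
    rw [Finset.prod_eq_zero (Finset.mem_univ s) hzero]
variable {ι : Type} [Fintype ι] [DecidableEq ι]

/-- single-site monomial factor -/
noncomputable def fac (u : ℕ × ℕ × ℕ × ℕ) (v : KK) : ℝ :=
  vA v ^ u.1 * vB v ^ u.2.1 * vC v ^ u.2.2.1 * vD v ^ u.2.2.2

noncomputable def Mon (e : ι → ℕ × ℕ × ℕ × ℕ) (w : ι → KK) : ℝ :=
  ∏ s : ι, fac (e s) (w s)

lemma fac_add (u u' : ℕ × ℕ × ℕ × ℕ) (v : KK) : fac (u + u') v = fac u v * fac u' v := by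
  unfold fac
  simp only [Prod.fst_add, Prod.snd_add, pow_add]
  ring

lemma sum_Mon (e : ι → ℕ × ℕ × ℕ × ℕ) :
    ∑ w : ι → KK, Mon e w = ∏ s : ι, Mm (e s).1 (e s).2.1 (e s).2.2.1 (e s).2.2.2 := by
  have : ∀ s : ι, Mm (e s).1 (e s).2.1 (e s).2.2.1 (e s).2.2.2 = ∑ v : KK, fac (e s) v := by
    intro s; rfl
  simp only [this]
  rw [Finset.prod_univ_sum]
  rw [Fintype.piFinset_univ]
  rfl

lemma Mon_update (e : ι → ℕ × ℕ × ℕ × ℕ) (i : ι) (u : ℕ × ℕ × ℕ × ℕ) (w : ι → KK) :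
    Mon (Function.update e i (e i + u)) w = fac u (w i) * Mon e w := by
  unfold Mon
  rw [← Finset.prod_erase_mul univ _ (mem_univ i), ← Finset.prod_erase_mul univ _ (mem_univ i)]
  rw [Function.update_self]
  have hprod : ∏ s ∈ univ.erase i, fac (Function.update e i (e i + u) s) (w s)
      = ∏ s ∈ univ.erase i, fac (e s) (w s) := by
    refine Finset.prod_congr rfl fun s hs => ?_
    rw [Function.update_of_ne (Finset.ne_of_mem_erase hs)]
  rw [hprod, fac_add]
  ring

lemma update_proj_sum (p : ℕ × ℕ × ℕ × ℕ → ℕ) (hp : ∀ x y, p (x + y) = p x + p y)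
    (e : ι → ℕ × ℕ × ℕ × ℕ) (i : ι) (u : ℕ × ℕ × ℕ × ℕ) :
    ∑ s : ι, p (Function.update e i (e i + u) s) = (∑ s : ι, p (e s)) + p u := by
  rw [← Finset.sum_erase_add univ _ (mem_univ i), ← Finset.sum_erase_add univ (fun s => p (e s)) (mem_univ i)]
  rw [Function.update_self, hp]
  have hsum : ∑ s ∈ univ.erase i, p (Function.update e i (e i + u) s)
      = ∑ s ∈ univ.erase i, p (e s) := by
    refine Finset.sum_congr rfl fun s hs => ?_
    rw [Function.update_of_ne (Finset.ne_of_mem_erase hs)]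
  rw [hsum]
  ring

/-- Functions that are nonnegative combinations of "good" monomials
(total D-degree even). -/
inductive IsGood : ((ι → KK) → ℝ) → Prop
  | mon (e : ι → ℕ × ℕ × ℕ × ℕ) (he : Even (∑ s : ι, (e s).2.2.2)) : IsGood (Mon e)
  | smul (c : ℝ) (f : (ι → KK) → ℝ) (hc : 0 ≤ c) (hf : IsGood f) :
      IsGood (fun w => c * f w)
  | add (f g : (ι → KK) → ℝ) (hf : IsGood f) (hg : IsGood g) :
      IsGood (fun w => f w + g w)

lemma IsGood.mul {f g : (ι → KK) → ℝ} (hf : IsGood f) (hg : IsGood g) :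
    IsGood (fun w => f w * g w) := by
  induction hf with
  | mon e he =>
    induction hg with
    | mon e' he' =>
      have : (fun w => Mon e w * Mon e' w) = Mon (fun s => e s + e' s) := by
        funext w
        unfold Mon
        rw [← Finset.prod_mul_distrib]
        exact Finset.prod_congr rfl fun s _ => (fac_add _ _ _).symm
      rw [this]
      refine IsGood.mon _ ?_
      have : ∑ s : ι, ((e s + e' s)).2.2.2 = (∑ s : ι, (e s).2.2.2) + ∑ s : ι, (e' s).2.2.2 := by
        rw [← Finset.sum_add_distrib]
        rfl
      rw [this]
      exact he.add he'
    | smul c g hc hg ih =>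
      have : (fun w => Mon e w * (c * g w)) = (fun w => c * (Mon e w * g w)) := by
        funext w; ring
      rw [this]; exact IsGood.smul _ _ hc ih
    | add g₁ g₂ hg₁ hg₂ ih₁ ih₂ =>
      have : (fun w => Mon e w * (g₁ w + g₂ w))
          = (fun w => Mon e w * g₁ w + Mon e w * g₂ w) := by funext w; ring
      rw [this]; exact IsGood.add _ _ ih₁ ih₂
  | smul c f hc hf ih =>
    have : (fun w => (c * f w) * g w) = (fun w => c * (f w * g w)) := by funext w; ring
    rw [this]; exact IsGood.smul _ _ hc ih
  | add f₁ f₂ hf₁ hf₂ ih₁ ih₂ =>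
    have : (fun w => (f₁ w + f₂ w) * g w) = (fun w => f₁ w * g w + f₂ w * g w) := by
      funext w; ring
    rw [this]; exact IsGood.add _ _ ih₁ ih₂

lemma IsGood.one : IsGood (fun _ : ι → KK => (1:ℝ)) := by
  have : (fun _ : ι → KK => (1:ℝ)) = Mon (fun _ => (0,0,0,0)) := by
    funext w; unfold Mon fac; simp
  rw [this]
  exact IsGood.mon _ (by simp)

lemma IsGood.pow {f : (ι → KK) → ℝ} (hf : IsGood f) (m : ℕ) :
    IsGood (fun w => f w ^ m) := by
  induction m with
  | zero => simpa using IsGood.one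
  | succ t ih =>
    have : (fun w => f w ^ (t+1)) = (fun w => f w ^ t * f w) := by
      funext w; rw [pow_succ]
    rw [this]; exact ih.mul hf

lemma IsGood.sum {κ : Type*} (t : Finset κ) (F : κ → (ι → KK) → ℝ)
    (h : ∀ m ∈ t, IsGood (F m)) : IsGood (fun w => ∑ m ∈ t, F m w) := by
  classical
  induction t using Finset.induction with
  | empty =>
    have h0 : (fun w : ι → KK => ∑ m ∈ (∅ : Finset κ), F m w)
        = fun _ : ι → KK => (0:ℝ) * 1 := by
      funext w; simp
    rw [h0]
    exact IsGood.smul 0 _ le_rfl IsGood.one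
  | insert a s hm ih =>
    have : (fun w => ∑ m ∈ insert a s, F m w) = fun w => F a w + ∑ m ∈ s, F m w := by
      funext w; rw [Finset.sum_insert hm]
    rw [this]
    exact IsGood.add _ _ (h a (Finset.mem_insert_self a s))
      (ih fun m hms => h m (Finset.mem_insert_of_mem hms))


section Obs
variable (i j k : ι)

lemma L_mon_nonpos (u : ℕ × ℕ × ℕ × ℕ) (hu : Even u.2.2.2)
    (e : ι → ℕ × ℕ × ℕ × ℕ) (he : Even (∑ s : ι, (e s).2.2.2)) :
    ∑ w : ι → KK, vC (w i) * vD (w j) * fac u (w k) * Mon e w ≤ 0 := by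
  set e1 := Function.update e k (e k + u) with he1
  set e2 := Function.update e1 i (e1 i + (0,0,1,0)) with he2
  set e3 := Function.update e2 j (e2 j + (0,0,0,1)) with he3
  have hfC : fac (0,0,1,0) = vC := by
    funext v; unfold fac; simp
  have hfD : fac (0,0,0,1) = vD := by
    funext v; unfold fac; simp
  have hsummand : ∀ w : ι → KK,
      vC (w i) * vD (w j) * fac u (w k) * Mon e w = Mon e3 w := by
    intro w
    rw [he3, Mon_update, he2, Mon_update, he1, Mon_update, hfC, hfD]
    ring
  have hd3 : Odd (∑ s : ι, (e3 s).2.2.2) := by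
    have hp : ∀ x y : ℕ × ℕ × ℕ × ℕ, (x + y).2.2.2 = x.2.2.2 + y.2.2.2 := fun x y => rfl
    have h3 := update_proj_sum (fun x => x.2.2.2) hp e2 j (0,0,0,1)
    have h2 := update_proj_sum (fun x => x.2.2.2) hp e1 i (0,0,1,0)
    have h1 := update_proj_sum (fun x => x.2.2.2) hp e k u
    rw [he3, h3, he2, h2, he1, h1]
    simp only []
    have : Even ((∑ s : ι, (e s).2.2.2) + u.2.2.2 + 0) := by
      simpa using he.add hu
    simpa using this.add_one
  calc ∑ w : ι → KK, vC (w i) * vD (w j) * fac u (w k) * Mon e w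
      = ∑ w : ι → KK, Mon e3 w := Finset.sum_congr rfl fun w _ => hsummand w
    _ = ∏ s : ι, Mm (e3 s).1 (e3 s).2.1 (e3 s).2.2.1 (e3 s).2.2.2 := sum_Mon e3
    _ ≤ 0 := prod_Mm_nonpos e3 hd3

lemma L_good_nonpos (u : ℕ × ℕ × ℕ × ℕ) (hu : Even u.2.2.2)
    {f : (ι → KK) → ℝ} (hf : IsGood f) :
    ∑ w : ι → KK, vC (w i) * vD (w j) * fac u (w k) * f w ≤ 0 := by
  induction hf with
  | mon e he => exact L_mon_nonpos i j k u hu e he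
  | smul c f hc hf ih =>
    have hrw : ∑ w : ι → KK, vC (w i) * vD (w j) * fac u (w k) * (c * f w)
        = c * ∑ w : ι → KK, vC (w i) * vD (w j) * fac u (w k) * f w := by
      rw [Finset.mul_sum]; exact Finset.sum_congr rfl fun w _ => by ring
    rw [hrw]
    exact mul_nonpos_iff.mpr (Or.inl ⟨hc, ih⟩)
  | add f g hf hg ihf ihg =>
    have hrw : ∑ w : ι → KK, vC (w i) * vD (w j) * fac u (w k) * (f w + g w)
        = (∑ w : ι → KK, vC (w i) * vD (w j) * fac u (w k) * f w)
          + ∑ w : ι → KK, vC (w i) * vD (w j) * fac u (w k) * g w := by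
      rw [← Finset.sum_add_distrib]; exact Finset.sum_congr rfl fun w _ => by ring
    rw [hrw]; linarith

noncomputable def obsfull (w : ι → KK) : ℝ :=
  (vC (w i) * vD (w j) + vD (w i) * vC (w j)) * (vA (w k) + vB (w k))

lemma L_obs_nonpos {f : (ι → KK) → ℝ} (hf : IsGood f) :
    ∑ w : ι → KK, obsfull i j k w * f w ≤ 0 := by
  have hfA : fac (1,0,0,0) = vA := by funext v; unfold fac; simp
  have hfB : fac (0,1,0,0) = vB := by funext v; unfold fac; simp
  have expand : ∀ w : ι → KK, obsfull i j k w * f w =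
      vC (w i) * vD (w j) * fac (1,0,0,0) (w k) * f w
    + vC (w i) * vD (w j) * fac (0,1,0,0) (w k) * f w
    + (vC (w j) * vD (w i) * fac (1,0,0,0) (w k) * f w
    + vC (w j) * vD (w i) * fac (0,1,0,0) (w k) * f w) := by
    intro w; rw [hfA, hfB]; unfold obsfull; ring
  rw [Finset.sum_congr rfl fun w _ => expand w]
  rw [Finset.sum_add_distrib, Finset.sum_add_distrib, Finset.sum_add_distrib]
  have h1 := L_good_nonpos i j k (1,0,0,0) (by simp) hf
  have h2 := L_good_nonpos i j k (0,1,0,0) (by simp) hf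
  have h3 := L_good_nonpos j i k (1,0,0,0) (by simp) hf
  have h4 := L_good_nonpos j i k (0,1,0,0) (by simp) hf
  linarith

lemma IsGood.mul' {f g : (ι → KK) → ℝ} (hf : IsGood f) (hg : IsGood g) :
    IsGood (f * g) := hf.mul hg

lemma IsGood.one' : IsGood (1 : (ι → KK) → ℝ) := IsGood.one

lemma L_exp_nonpos {m : Type} [Fintype m] (c : m → ℝ) (hc : ∀ t, 0 ≤ c t)
    (E : m → ι → ℕ × ℕ × ℕ × ℕ) (hE : ∀ t, Even (∑ s : ι, (E t s).2.2.2)) :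
    ∑ w : ι → KK, obsfull i j k w * Real.exp (∑ t, c t * Mon (E t) w) ≤ 0 := by
  set F : ℕ → (ι → KK) → ℝ :=
    fun N w => ∏ t : m, ∑ r ∈ Finset.range N, (c t * Mon (E t) w)^r / r.factorial with hF
  have hgood : ∀ N, IsGood (F N) := by
    intro N
    have hfac : ∀ t : m, IsGood
        (fun w : ι → KK => ∑ r ∈ Finset.range N, (c t * Mon (E t) w)^r / r.factorial) := by
      intro t
      have hrw : (fun w : ι → KK => ∑ r ∈ Finset.range N, (c t * Mon (E t) w)^r / r.factorial)
          = fun w : ι → KK => ∑ r ∈ Finset.range N,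
              (c t ^ r / r.factorial) * (Mon (E t) w) ^ r := by
        funext w
        refine Finset.sum_congr rfl fun r _ => ?_
        rw [mul_pow]; ring
      rw [hrw]
      refine IsGood.sum _ _ fun r _ => ?_
      refine IsGood.smul _ _ ?_ ((IsGood.mon _ (hE t)).pow r)
      have h1 : (0:ℝ) ≤ c t ^ r := pow_nonneg (hc t) r
      have h2 : (0:ℝ) < r.factorial := by exact_mod_cast r.factorial_pos
      exact div_nonneg h1 h2.le
    have hrw2 : F N = ∏ t : m, (fun w : ι → KK =>
        ∑ r ∈ Finset.range N, (c t * Mon (E t) w)^r / r.factorial) := by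
      funext w
      rw [hF, Finset.prod_apply]
    rw [hrw2]
    refine Finset.prod_induction _ IsGood (fun f g => IsGood.mul') IsGood.one'
      (fun t _ => hfac t)
  have hle : ∀ N, ∑ w : ι → KK, obsfull i j k w * F N w ≤ 0 :=
    fun N => L_obs_nonpos i j k (hgood N)
  have htend : Filter.Tendsto (fun N => ∑ w : ι → KK, obsfull i j k w * F N w)
      Filter.atTop
      (nhds (∑ w : ι → KK, obsfull i j k w * Real.exp (∑ t, c t * Mon (E t) w))) := by
    apply tendsto_finset_sum
    intro w _
    apply Filter.Tendsto.const_mul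
    have hexp : Real.exp (∑ t, c t * Mon (E t) w)
        = ∏ t : m, Real.exp (c t * Mon (E t) w) := Real.exp_sum _ _
    rw [hexp]
    apply tendsto_finset_prod
    intro t _
    have hh := (NormedSpace.expSeries_div_hasSum_exp
      (c t * Mon (E t) w)).tendsto_sum_nat
    rw [Real.exp_eq_exp_ℝ]
    exact hh
  exact le_of_tendsto htend (Filter.Eventually.of_forall hle)

end Obs


section Bridge
variable (Hm : (ι → Fin 2) → ℝ)

noncomputable def Tf (f : (ι → Fin 2) → ℝ) : ℝ := ∑ x : ι → Fin 2, f x * Real.exp (Hm x)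

noncomputable def H4 (w : ι → KK) : ℝ :=
  Hm (fun s => (w s).1) + Hm (fun s => (w s).2.1)
    + Hm (fun s => (w s).2.2.1) + Hm (fun s => (w s).2.2.2)

def bEquiv : (ι → KK) ≃ ((ι → Fin 2) × (ι → Fin 2) × (ι → Fin 2) × (ι → Fin 2)) where
  toFun w := (fun s => (w s).1, fun s => (w s).2.1, fun s => (w s).2.2.1, fun s => (w s).2.2.2)
  invFun p := fun s => (p.1 s, p.2.1 s, p.2.2.1 s, p.2.2.2 s)
  left_inv w := rfl
  right_inv p := rfl

lemma sum_bridge (G : (ι → KK) → ℝ) :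
    ∑ w : ι → KK, G w
      = ∑ x : ι → Fin 2, ∑ x' : ι → Fin 2, ∑ y : ι → Fin 2, ∑ y' : ι → Fin 2,
          G (fun s => (x s, x' s, y s, y' s)) := by
  rw [← Equiv.sum_comp (bEquiv (ι := ι)).symm G]
  rw [Fintype.sum_prod_type]
  refine Finset.sum_congr rfl fun x _ => ?_
  rw [Fintype.sum_prod_type]
  refine Finset.sum_congr rfl fun x' _ => ?_
  rw [Fintype.sum_prod_type]
  rfl

lemma sum2_split (f g : (ι → Fin 2) → ℝ) :
    ∑ x : ι → Fin 2, ∑ x' : ι → Fin 2,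
        (f x * g x') * (Real.exp (Hm x) * Real.exp (Hm x'))
      = Tf Hm f * Tf Hm g := by
  unfold Tf
  rw [Finset.sum_mul_sum]
  exact Finset.sum_congr rfl fun x _ => Finset.sum_congr rfl fun x' _ => by ring

lemma sum4_split (f g : (ι → Fin 2) → (ι → Fin 2) → ℝ) :
    ∑ x : ι → Fin 2, ∑ x' : ι → Fin 2, ∑ y : ι → Fin 2, ∑ y' : ι → Fin 2,
        f x x' * g y y'
      = (∑ x : ι → Fin 2, ∑ x' : ι → Fin 2, f x x')
        * (∑ y : ι → Fin 2, ∑ y' : ι → Fin 2, g y y') := by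
  have h1 : ∀ x x', ∑ y : ι → Fin 2, ∑ y' : ι → Fin 2, f x x' * g y y'
      = f x x' * ∑ y : ι → Fin 2, ∑ y' : ι → Fin 2, g y y' := by
    intro x x'
    rw [Finset.mul_sum]
    exact Finset.sum_congr rfl fun y _ => (Finset.mul_sum _ _ _).symm
  calc ∑ x : ι → Fin 2, ∑ x' : ι → Fin 2, ∑ y : ι → Fin 2, ∑ y' : ι → Fin 2, f x x' * g y y'
      = ∑ x : ι → Fin 2, ∑ x' : ι → Fin 2,
          f x x' * ∑ y : ι → Fin 2, ∑ y' : ι → Fin 2, g y y' :=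
        Finset.sum_congr rfl fun x _ => Finset.sum_congr rfl fun x' _ => h1 x x'
    _ = _ := by
        rw [Finset.sum_mul]
        exact Finset.sum_congr rfl fun x _ => (Finset.sum_mul _ _ _).symm

lemma P2_ttq (i j k : ι) :
    ∑ x : ι → Fin 2, ∑ x' : ι → Fin 2,
      ((vl (x i) - vl (x' i)) * ((vl (x j) - vl (x' j)) * (vl (x k) + vl (x' k))))
        * (Real.exp (Hm x) * Real.exp (Hm x'))
    = 2 * (Tf Hm (fun x => vl (x i) * vl (x j) * vl (x k)) * Tf Hm (fun _ => 1)
         + Tf Hm (fun x => vl (x i) * vl (x j)) * Tf Hm (fun x => vl (x k))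
         - Tf Hm (fun x => vl (x i) * vl (x k)) * Tf Hm (fun x => vl (x j))
         - Tf Hm (fun x => vl (x i)) * Tf Hm (fun x => vl (x j) * vl (x k))) := by
  have expand : ∀ x x' : ι → Fin 2,
      ((vl (x i) - vl (x' i)) * ((vl (x j) - vl (x' j)) * (vl (x k) + vl (x' k))))
        * (Real.exp (Hm x) * Real.exp (Hm x'))
    = ((vl (x i) * vl (x j) * vl (x k)) * (1:ℝ)) * (Real.exp (Hm x) * Real.exp (Hm x'))
    + ((vl (x i) * vl (x j)) * (vl (x' k))) * (Real.exp (Hm x) * Real.exp (Hm x'))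
    - ((vl (x i) * vl (x k)) * (vl (x' j))) * (Real.exp (Hm x) * Real.exp (Hm x'))
    - ((vl (x i)) * (vl (x' j) * vl (x' k))) * (Real.exp (Hm x) * Real.exp (Hm x'))
    - ((vl (x j) * vl (x k)) * (vl (x' i))) * (Real.exp (Hm x) * Real.exp (Hm x'))
    - ((vl (x j)) * (vl (x' i) * vl (x' k))) * (Real.exp (Hm x) * Real.exp (Hm x'))
    + ((vl (x k)) * (vl (x' i) * vl (x' j))) * (Real.exp (Hm x) * Real.exp (Hm x'))
    + ((1:ℝ) * (vl (x' i) * vl (x' j) * vl (x' k))) * (Real.exp (Hm x) * Real.exp (Hm x')) :=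
    fun x x' => by ring
  rw [Finset.sum_congr rfl fun x _ => Finset.sum_congr rfl fun x' _ => expand x x']
  simp only [Finset.sum_add_distrib, Finset.sum_sub_distrib]
  rw [sum2_split Hm (fun x => vl (x i) * vl (x j) * vl (x k)) (fun _ => 1),
      sum2_split Hm (fun x => vl (x i) * vl (x j)) (fun x => vl (x k)),
      sum2_split Hm (fun x => vl (x i) * vl (x k)) (fun x => vl (x j)),
      sum2_split Hm (fun x => vl (x i)) (fun x => vl (x j) * vl (x k)),
      sum2_split Hm (fun x => vl (x j) * vl (x k)) (fun x => vl (x i)),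
      sum2_split Hm (fun x => vl (x j)) (fun x => vl (x i) * vl (x k)),
      sum2_split Hm (fun x => vl (x k)) (fun x => vl (x i) * vl (x j)),
      sum2_split Hm (fun _ => (1:ℝ)) (fun x => vl (x i) * vl (x j) * vl (x k))]
  have hc : ∀ f g : (ι → Fin 2) → ℝ, Tf Hm f * Tf Hm g = Tf Hm g * Tf Hm f :=
    fun f g => mul_comm _ _
  rw [hc (fun x => vl (x j) * vl (x k)) (fun x => vl (x i)),
      hc (fun x => vl (x j)) (fun x => vl (x i) * vl (x k)),
      hc (fun x => vl (x k)) (fun x => vl (x i) * vl (x j)),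
      hc (fun _ => (1:ℝ)) (fun x => vl (x i) * vl (x j) * vl (x k))]
  ring

lemma P2_tt (i j : ι) :
    ∑ x : ι → Fin 2, ∑ x' : ι → Fin 2,
      ((vl (x i) - vl (x' i)) * (vl (x j) - vl (x' j)))
        * (Real.exp (Hm x) * Real.exp (Hm x'))
    = 2 * (Tf Hm (fun x => vl (x i) * vl (x j)) * Tf Hm (fun _ => 1)
         - Tf Hm (fun x => vl (x i)) * Tf Hm (fun x => vl (x j))) := by
  have expand : ∀ x x' : ι → Fin 2,
      ((vl (x i) - vl (x' i)) * (vl (x j) - vl (x' j)))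
        * (Real.exp (Hm x) * Real.exp (Hm x'))
    = ((vl (x i) * vl (x j)) * (1:ℝ)) * (Real.exp (Hm x) * Real.exp (Hm x'))
    - ((vl (x i)) * (vl (x' j))) * (Real.exp (Hm x) * Real.exp (Hm x'))
    - ((vl (x j)) * (vl (x' i))) * (Real.exp (Hm x) * Real.exp (Hm x'))
    + ((1:ℝ) * (vl (x' i) * vl (x' j))) * (Real.exp (Hm x) * Real.exp (Hm x')) :=
    fun x x' => by ring
  rw [Finset.sum_congr rfl fun x _ => Finset.sum_congr rfl fun x' _ => expand x x']
  simp only [Finset.sum_add_distrib, Finset.sum_sub_distrib]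
  rw [sum2_split Hm (fun x => vl (x i) * vl (x j)) (fun _ => 1),
      sum2_split Hm (fun x => vl (x i)) (fun x => vl (x j)),
      sum2_split Hm (fun x => vl (x j)) (fun x => vl (x i)),
      sum2_split Hm (fun _ => (1:ℝ)) (fun x => vl (x i) * vl (x j))]
  have hc : ∀ f g : (ι → Fin 2) → ℝ, Tf Hm f * Tf Hm g = Tf Hm g * Tf Hm f :=
    fun f g => mul_comm _ _
  rw [hc (fun x => vl (x j)) (fun x => vl (x i)),
      hc (fun _ => (1:ℝ)) (fun x => vl (x i) * vl (x j))]
  ring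

lemma P2_q (k : ι) :
    ∑ x : ι → Fin 2, ∑ x' : ι → Fin 2,
      (vl (x k) + vl (x' k)) * (Real.exp (Hm x) * Real.exp (Hm x'))
    = 2 * (Tf Hm (fun x => vl (x k)) * Tf Hm (fun _ => 1)) := by
  have expand : ∀ x x' : ι → Fin 2,
      (vl (x k) + vl (x' k)) * (Real.exp (Hm x) * Real.exp (Hm x'))
    = ((vl (x k)) * (1:ℝ)) * (Real.exp (Hm x) * Real.exp (Hm x'))
    + ((1:ℝ) * (vl (x' k))) * (Real.exp (Hm x) * Real.exp (Hm x')) :=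
    fun x x' => by ring
  rw [Finset.sum_congr rfl fun x _ => Finset.sum_congr rfl fun x' _ => expand x x']
  simp only [Finset.sum_add_distrib]
  rw [sum2_split Hm (fun x => vl (x k)) (fun _ => 1),
      sum2_split Hm (fun _ => (1:ℝ)) (fun x => vl (x k))]
  have hc : Tf Hm (fun _ => (1:ℝ)) * Tf Hm (fun x => vl (x k))
      = Tf Hm (fun x => vl (x k)) * Tf Hm (fun _ => (1:ℝ)) := mul_comm _ _
  rw [hc]; ring

lemma P2_one :
    ∑ x : ι → Fin 2, ∑ x' : ι → Fin 2,
      Real.exp (Hm x) * Real.exp (Hm x')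
    = Tf Hm (fun _ => 1) * Tf Hm (fun _ => 1) := by
  have expand : ∀ x x' : ι → Fin 2,
      Real.exp (Hm x) * Real.exp (Hm x')
    = ((1:ℝ) * (1:ℝ)) * (Real.exp (Hm x) * Real.exp (Hm x')) := fun x x' => by ring
  rw [Finset.sum_congr rfl fun x _ => Finset.sum_congr rfl fun x' _ => expand x x']
  exact sum2_split Hm (fun _ => 1) (fun _ => 1)

end Bridge


section Master
variable (Hm : (ι → Fin 2) → ℝ)

lemma master_identity (i j k : ι) :
    ∑ w : ι → KK, obsfull i j k w * Real.exp (H4 Hm w)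
  = 8 * ( Tf Hm (fun x => vl (x i) * vl (x j) * vl (x k)) * (Tf Hm (fun _ => 1))^3
        - Tf Hm (fun x => vl (x i)) * Tf Hm (fun x => vl (x j) * vl (x k))
            * (Tf Hm (fun _ => 1))^2
        - Tf Hm (fun x => vl (x j)) * Tf Hm (fun x => vl (x i) * vl (x k))
            * (Tf Hm (fun _ => 1))^2
        - Tf Hm (fun x => vl (x k)) * Tf Hm (fun x => vl (x i) * vl (x j))
            * (Tf Hm (fun _ => 1))^2
        + 2 * Tf Hm (fun x => vl (x i)) * Tf Hm (fun x => vl (x j))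
            * Tf Hm (fun x => vl (x k)) * Tf Hm (fun _ => 1) ) := by
  have pull4 : ∀ W : (ι → Fin 2) → (ι → Fin 2) → ℝ,
      ∑ x : ι → Fin 2, ∑ x' : ι → Fin 2, 4 * W x x'
        = 4 * ∑ x : ι → Fin 2, ∑ x' : ι → Fin 2, W x x' := by
    intro W
    rw [Finset.mul_sum]
    exact Finset.sum_congr rfl fun x _ => (Finset.mul_sum _ _ _).symm
  rw [sum_bridge (fun w => obsfull i j k w * Real.exp (H4 Hm w))]
  have hpt : ∀ x x' y y' : ι → Fin 2,
      obsfull i j k (fun s => (x s, x' s, y s, y' s))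
        * Real.exp (H4 Hm (fun s => (x s, x' s, y s, y' s)))
    = (4 * (((vl (x i) - vl (x' i)) * ((vl (x j) - vl (x' j)) * (vl (x k) + vl (x' k))))
            * (Real.exp (Hm x) * Real.exp (Hm x'))))
          * (Real.exp (Hm y) * Real.exp (Hm y'))
    - ((vl (x k) + vl (x' k)) * (Real.exp (Hm x) * Real.exp (Hm x')))
          * (4 * (((vl (y i) - vl (y' i)) * (vl (y j) - vl (y' j)))
            * (Real.exp (Hm y) * Real.exp (Hm y')))) := by
    intro x x' y y'
    unfold obsfull H4 vA vB vC vD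
    rw [Real.exp_add, Real.exp_add, Real.exp_add]
    ring
  rw [Finset.sum_congr rfl fun x _ => Finset.sum_congr rfl fun x' _ =>
      Finset.sum_congr rfl fun y _ => Finset.sum_congr rfl fun y' _ => hpt x x' y y']
  simp only [Finset.sum_sub_distrib]
  rw [sum4_split (fun x x' =>
        4 * ((((vl (x i) - vl (x' i)) * ((vl (x j) - vl (x' j)) * (vl (x k) + vl (x' k))))
          * (Real.exp (Hm x) * Real.exp (Hm x')))))
      (fun y y' => Real.exp (Hm y) * Real.exp (Hm y'))]
  rw [sum4_split (fun x x' => (vl (x k) + vl (x' k)) * (Real.exp (Hm x) * Real.exp (Hm x')))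
      (fun y y' => 4 * (((vl (y i) - vl (y' i)) * (vl (y j) - vl (y' j)))
          * (Real.exp (Hm y) * Real.exp (Hm y'))))]
  rw [pull4 (fun x x' =>
        (((vl (x i) - vl (x' i)) * ((vl (x j) - vl (x' j)) * (vl (x k) + vl (x' k))))
          * (Real.exp (Hm x) * Real.exp (Hm x'))))]
  rw [pull4 (fun y y' => (((vl (y i) - vl (y' i)) * (vl (y j) - vl (y' j)))
          * (Real.exp (Hm y) * Real.exp (Hm y'))))]
  rw [P2_ttq Hm i j k, P2_one Hm, P2_q Hm k, P2_tt Hm i j]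
  ring

end Master


section Concrete
variable (n : ℕ) (α : Edge n → Edge n → ℝ) (h : Edge n → ℝ)

lemma fac_A : fac (1,0,0,0) = vA := by funext v; unfold fac; simp
lemma fac_B : fac (0,1,0,0) = vB := by funext v; unfold fac; simp
lemma fac_C : fac (0,0,1,0) = vC := by funext v; unfold fac; simp
lemma fac_D : fac (0,0,0,1) = vD := by funext v; unfold fac; simp

abbrev Idx (n : ℕ) := (Edge n × Edge n × Fin 4) ⊕ Edge n

def uvec : Fin 4 → ℕ × ℕ × ℕ × ℕ
  | 0 => (1,0,0,0)
  | 1 => (0,1,0,0)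
  | 2 => (0,0,1,0)
  | 3 => (0,0,0,1)

def zeroE : Edge n → ℕ × ℕ × ℕ × ℕ := fun _ => (0,0,0,0)

noncomputable def cf : Idx n → ℝ
  | Sum.inl (p, q, _) => (1 / (2 * (n:ℝ))) * (if EdgeAdj p q then α p q else 0) / 4
  | Sum.inr s => h s

def pairE (p q : Edge n) (u : ℕ × ℕ × ℕ × ℕ) : Edge n → ℕ × ℕ × ℕ × ℕ :=
  Function.update (Function.update (zeroE n) p ((zeroE n) p + u)) q
    ((Function.update (zeroE n) p ((zeroE n) p + u)) q + u)

def Ee : Idx n → Edge n → ℕ × ℕ × ℕ × ℕ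
  | Sum.inl (p, q, f) => pairE n p q (uvec f)
  | Sum.inr s => Function.update (zeroE n) s ((zeroE n) s + (1,0,0,0))

lemma Mon_zeroE : ∀ w : Edge n → KK, Mon (zeroE n) w = 1 := by
  intro w; unfold Mon zeroE fac; simp

lemma Mon_pairE (p q : Edge n) (u : ℕ × ℕ × ℕ × ℕ) (w : Edge n → KK) :
    Mon (pairE n p q u) w = fac u (w q) * fac u (w p) := by
  unfold pairE
  rw [Mon_update, Mon_update, Mon_zeroE]
  ring

lemma cf_nonneg (hα : ∀ i j, EdgeAdj i j → 0 ≤ α i j) (hh : ∀ i, 0 ≤ h i) :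
    ∀ t : Idx n, 0 ≤ cf n α h t := by
  intro t
  match t with
  | Sum.inl (p, q, f) =>
    show 0 ≤ (1 / (2 * (n:ℝ))) * (if EdgeAdj p q then α p q else 0) / 4
    have h1 : (0:ℝ) ≤ 1 / (2 * (n:ℝ)) := by positivity
    have h2 : (0:ℝ) ≤ if EdgeAdj p q then α p q else 0 := by
      split_ifs with hadj
      · exact hα p q hadj
      · exact le_rfl
    positivity
  | Sum.inr s => exact hh s

lemma Ee_even_d : ∀ t : Idx n, Even (∑ s : Edge n, (Ee n t s).2.2.2) := by
  have hp : ∀ x y : ℕ × ℕ × ℕ × ℕ, (x + y).2.2.2 = x.2.2.2 + y.2.2.2 := fun x y => rfl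
  have hz : ∑ s : Edge n, ((zeroE n) s).2.2.2 = 0 := by simp [zeroE]
  intro t
  match t with
  | Sum.inl (p, q, f) =>
    show Even (∑ s : Edge n, ((pairE n p q (uvec f)) s).2.2.2)
    unfold pairE
    rw [update_proj_sum (fun x => x.2.2.2) hp, update_proj_sum (fun x => x.2.2.2) hp, hz]
    simp only [zero_add]
    exact ⟨_, rfl⟩
  | Sum.inr s =>
    show Even (∑ s' : Edge n, ((Function.update (zeroE n) s ((zeroE n) s + (1,0,0,0))) s').2.2.2)
    rw [update_proj_sum (fun x => x.2.2.2) hp, hz]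
    simp

lemma hfield (w : Edge n → KK) : ∑ s : Edge n, h s * vA (w s)
    = (∑ s : Edge n, h s * (((w s).1 : ℕ) : ℝ))
    + ((∑ s : Edge n, h s * (((w s).2.1 : ℕ) : ℝ))
    + ((∑ s : Edge n, h s * (((w s).2.2.1 : ℕ) : ℝ))
    + (∑ s : Edge n, h s * (((w s).2.2.2 : ℕ) : ℝ)))) := by
  simp only [← Finset.sum_add_distrib]
  refine Finset.sum_congr rfl fun s _ => ?_
  unfold vA vl
  ring

lemma H4_eq (w : Edge n → KK) :
    H4 (Ham n α h) w = ∑ t : Idx n, cf n α h t * Mon (Ee n t) w := by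
  have pullc : ∀ (c : ℝ) (W : Edge n → Edge n → ℝ),
      ∑ p : Edge n, ∑ q : Edge n, c * W p q = c * ∑ p : Edge n, ∑ q : Edge n, W p q := by
    intro c W
    rw [Finset.mul_sum]
    exact Finset.sum_congr rfl fun p _ => (Finset.mul_sum _ _ _).symm
  rw [Fintype.sum_sum_type]
  have hinr : ∑ s : Edge n, cf n α h (Sum.inr s) * Mon (Ee n (Sum.inr s)) w
      = ∑ s : Edge n, h s * vA (w s) := by
    refine Finset.sum_congr rfl fun s _ => ?_
    show h s * Mon (Function.update (zeroE n) s ((zeroE n) s + (1,0,0,0))) w = _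
    rw [Mon_update, Mon_zeroE, fac_A]
    ring
  have hinl : ∑ pqf : Edge n × Edge n × Fin 4,
        cf n α h (Sum.inl pqf) * Mon (Ee n (Sum.inl pqf)) w
      = ∑ p : Edge n, ∑ q : Edge n, (1 / (2 * (n:ℝ))) *
          ((if EdgeAdj p q then α p q * (((w p).1 : ℕ) : ℝ) * (((w q).1 : ℕ) : ℝ) else 0)
         + ((if EdgeAdj p q then α p q * (((w p).2.1 : ℕ) : ℝ) * (((w q).2.1 : ℕ) : ℝ) else 0)
         + ((if EdgeAdj p q then α p q * (((w p).2.2.1 : ℕ) : ℝ) * (((w q).2.2.1 : ℕ) : ℝ) else 0)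
         + (if EdgeAdj p q then α p q * (((w p).2.2.2 : ℕ) : ℝ) * (((w q).2.2.2 : ℕ) : ℝ) else 0)))) := by
    rw [Fintype.sum_prod_type]
    refine Finset.sum_congr rfl fun p _ => ?_
    rw [Fintype.sum_prod_type]
    refine Finset.sum_congr rfl fun q _ => ?_
    rw [Fin.sum_univ_four]
    show (1 / (2 * (n:ℝ))) * (if EdgeAdj p q then α p q else 0) / 4
            * Mon (pairE n p q (1,0,0,0)) w
       + (1 / (2 * (n:ℝ))) * (if EdgeAdj p q then α p q else 0) / 4
            * Mon (pairE n p q (0,1,0,0)) w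
       + (1 / (2 * (n:ℝ))) * (if EdgeAdj p q then α p q else 0) / 4
            * Mon (pairE n p q (0,0,1,0)) w
       + (1 / (2 * (n:ℝ))) * (if EdgeAdj p q then α p q else 0) / 4
            * Mon (pairE n p q (0,0,0,1)) w = _
    rw [Mon_pairE, Mon_pairE, Mon_pairE, Mon_pairE, fac_A, fac_B, fac_C, fac_D]
    unfold vA vB vC vD vl
    split_ifs with hadj
    · ring
    · ring
  rw [hinl, hinr, hfield]
  have hsplit : ∑ p : Edge n, ∑ q : Edge n, (1 / (2 * (n:ℝ))) *
          ((if EdgeAdj p q then α p q * (((w p).1 : ℕ) : ℝ) * (((w q).1 : ℕ) : ℝ) else 0)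
         + ((if EdgeAdj p q then α p q * (((w p).2.1 : ℕ) : ℝ) * (((w q).2.1 : ℕ) : ℝ) else 0)
         + ((if EdgeAdj p q then α p q * (((w p).2.2.1 : ℕ) : ℝ) * (((w q).2.2.1 : ℕ) : ℝ) else 0)
         + (if EdgeAdj p q then α p q * (((w p).2.2.2 : ℕ) : ℝ) * (((w q).2.2.2 : ℕ) : ℝ) else 0))))
      = (1 / (2 * (n:ℝ))) * (∑ p : Edge n, ∑ q : Edge n,
          (if EdgeAdj p q then α p q * (((w p).1 : ℕ) : ℝ) * (((w q).1 : ℕ) : ℝ) else 0))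
      + ((1 / (2 * (n:ℝ))) * (∑ p : Edge n, ∑ q : Edge n,
          (if EdgeAdj p q then α p q * (((w p).2.1 : ℕ) : ℝ) * (((w q).2.1 : ℕ) : ℝ) else 0))
      + ((1 / (2 * (n:ℝ))) * (∑ p : Edge n, ∑ q : Edge n,
          (if EdgeAdj p q then α p q * (((w p).2.2.1 : ℕ) : ℝ) * (((w q).2.2.1 : ℕ) : ℝ) else 0))
      + (1 / (2 * (n:ℝ))) * (∑ p : Edge n, ∑ q : Edge n,
          (if EdgeAdj p q then α p q * (((w p).2.2.2 : ℕ) : ℝ) * (((w q).2.2.2 : ℕ) : ℝ) else 0)))) := by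
    rw [← pullc, ← pullc, ← pullc, ← pullc]
    simp only [← Finset.sum_add_distrib]
    refine Finset.sum_congr rfl fun p _ => Finset.sum_congr rfl fun q _ => by ring
  rw [hsplit]
  unfold H4 Ham
  ring

end Concrete

end GHSaux

/-- Theorem 3.10, GHS inequality: if `α ≥ 0` on wedges and `h ≥ 0`
on edges, then the third Ursell function is nonpositive. -/
theorem ghs_inequality (n : ℕ) (hn : 2 ≤ n)
    (α : Edge n → Edge n → ℝ) (h : Edge n → ℝ)
    (hsym : ∀ i j, α i j = α j i)
    (hα : ∀ i j, EdgeAdj i j → 0 ≤ α i j)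
    (hh : ∀ i, 0 ≤ h i)
    (i j k : Edge n) :
    expect n α h (fun x => ((x i : ℕ) : ℝ) * ((x j : ℕ) : ℝ) * ((x k : ℕ) : ℝ))
      - expect n α h (fun x => ((x i : ℕ) : ℝ))
          * expect n α h (fun x => ((x j : ℕ) : ℝ) * ((x k : ℕ) : ℝ))
      - expect n α h (fun x => ((x j : ℕ) : ℝ))
          * expect n α h (fun x => ((x i : ℕ) : ℝ) * ((x k : ℕ) : ℝ))
      - expect n α h (fun x => ((x k : ℕ) : ℝ))
          * expect n α h (fun x => ((x i : ℕ) : ℝ) * ((x j : ℕ) : ℝ))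
      + 2 * expect n α h (fun x => ((x i : ℕ) : ℝ))
          * expect n α h (fun x => ((x j : ℕ) : ℝ))
          * expect n α h (fun x => ((x k : ℕ) : ℝ)) ≤ 0 := by
  classical
  set Hm := Ham n α h with hHm
  have hTf1 : GHSaux.Tf Hm (fun _ => 1) = Zpart n α h := by
    unfold GHSaux.Tf Zpart
    exact Finset.sum_congr rfl fun x _ => one_mul _
  have hZpos : 0 < GHSaux.Tf Hm (fun _ => 1) := by
    rw [hTf1]
    exact Finset.sum_pos (fun x _ => Real.exp_pos _) Finset.univ_nonempty
  have hexp : ∀ f : (Edge n → Fin 2) → ℝ,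
      _root_.expect n α h f = GHSaux.Tf Hm f / GHSaux.Tf Hm (fun _ => 1) := by
    intro f
    rw [hTf1]
    unfold _root_.expect gibbs GHSaux.Tf Zpart
    rw [Finset.sum_div]
    exact Finset.sum_congr rfl fun x _ => (mul_div_assoc _ _ _).symm
  have hneg : ∑ w : Edge n → GHSaux.KK,
      GHSaux.obsfull i j k w * Real.exp (GHSaux.H4 Hm w) ≤ 0 := by
    have h1 := GHSaux.L_exp_nonpos i j k (GHSaux.cf n α h)
      (GHSaux.cf_nonneg n α h hα hh) (GHSaux.Ee n) (GHSaux.Ee_even_d n)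
    have h2 : ∑ w : Edge n → GHSaux.KK,
        GHSaux.obsfull i j k w * Real.exp (GHSaux.H4 Hm w)
      = ∑ w : Edge n → GHSaux.KK, GHSaux.obsfull i j k w
          * Real.exp (∑ t, GHSaux.cf n α h t * GHSaux.Mon (GHSaux.Ee n t) w) :=
      Finset.sum_congr rfl fun w _ => by rw [GHSaux.H4_eq n α h w]
    rw [h2]
    exact h1
  rw [GHSaux.master_identity Hm i j k] at hneg
  have e1 : _root_.expect n α h (fun x => ((x i : ℕ) : ℝ))
      = GHSaux.Tf Hm (fun x => GHSaux.vl (x i)) / GHSaux.Tf Hm (fun _ => 1) := hexp _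
  have e2 : _root_.expect n α h (fun x => ((x j : ℕ) : ℝ))
      = GHSaux.Tf Hm (fun x => GHSaux.vl (x j)) / GHSaux.Tf Hm (fun _ => 1) := hexp _
  have e3 : _root_.expect n α h (fun x => ((x k : ℕ) : ℝ))
      = GHSaux.Tf Hm (fun x => GHSaux.vl (x k)) / GHSaux.Tf Hm (fun _ => 1) := hexp _
  have e4 : _root_.expect n α h (fun x => ((x i : ℕ) : ℝ) * ((x j : ℕ) : ℝ))
      = GHSaux.Tf Hm (fun x => GHSaux.vl (x i) * GHSaux.vl (x j))
          / GHSaux.Tf Hm (fun _ => 1) := hexp _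
  have e5 : _root_.expect n α h (fun x => ((x i : ℕ) : ℝ) * ((x k : ℕ) : ℝ))
      = GHSaux.Tf Hm (fun x => GHSaux.vl (x i) * GHSaux.vl (x k))
          / GHSaux.Tf Hm (fun _ => 1) := hexp _
  have e6 : _root_.expect n α h (fun x => ((x j : ℕ) : ℝ) * ((x k : ℕ) : ℝ))
      = GHSaux.Tf Hm (fun x => GHSaux.vl (x j) * GHSaux.vl (x k))
          / GHSaux.Tf Hm (fun _ => 1) := hexp _
  have e7 : _root_.expect n α h (fun x => ((x i : ℕ) : ℝ) * ((x j : ℕ) : ℝ) * ((x k : ℕ) : ℝ))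
      = GHSaux.Tf Hm (fun x => GHSaux.vl (x i) * GHSaux.vl (x j) * GHSaux.vl (x k))
          / GHSaux.Tf Hm (fun _ => 1) := hexp _
  rw [e1, e2, e3, e4, e5, e6, e7]
  set z := GHSaux.Tf Hm (fun _ => 1) with hz
  set ta := GHSaux.Tf Hm (fun x => GHSaux.vl (x i) * GHSaux.vl (x j) * GHSaux.vl (x k)) with hta
  set tb := GHSaux.Tf Hm (fun x => GHSaux.vl (x i)) with htb
  set tc := GHSaux.Tf Hm (fun x => GHSaux.vl (x j)) with htc
  set td := GHSaux.Tf Hm (fun x => GHSaux.vl (x k)) with htd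
  set te := GHSaux.Tf Hm (fun x => GHSaux.vl (x i) * GHSaux.vl (x j)) with hte
  set tf := GHSaux.Tf Hm (fun x => GHSaux.vl (x i) * GHSaux.vl (x k)) with htf
  set tg := GHSaux.Tf Hm (fun x => GHSaux.vl (x j) * GHSaux.vl (x k)) with htg
  have hzne : z ≠ 0 := ne_of_gt hZpos
  have key : ta * z^3 - tb * tg * z^2 - tc * tf * z^2 - td * te * z^2
      + 2 * tb * tc * td * z ≤ 0 := by linarith
  have heq : ta / z - tb / z * (tg / z) - tc / z * (tf / z) - td / z * (te / z)
      + 2 * (tb / z) * (tc / z) * (td / z)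
      = (ta * z^3 - tb * tg * z^2 - tc * tf * z^2 - td * te * z^2
          + 2 * tb * tc * td * z) / z^4 := by
    field_simp
  rw [heq]
  exact div_nonpos_iff.mpr (Or.inr ⟨key, (pow_pos hZpos 4).le⟩)
end

section
/- Let n ≥ 2, let α = (α_{ij}) be real parameters indexed by wedges and h = (h_i) real parameters indexed by edges, with α_{ij} ≥ 0 for all wedges and h_i ≥ 0 for all edges. Let (x, y) be distributed according to the product measure μ(x,y) = μ_{n;α,h}(x)·μ_{n;α,h}(y) on A_n × A_n with expectation E, and set z_i := x_i − y_i and v_i := (x_i + y_i)/2 for each edge i, and z_C := Π_{i∈C} z_i, v_D := Π_{i∈D} v_i for C, D ⊆ E_n. Then for all subsets C, D ⊆ E_n, E(z_C v_D) ≤ E(z_C) · E(v_D). -/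
open Finset

/-- Expectation with respect to the product (duplicated) measure `μ(x,y) = μ(x)μ(y)`. -/
noncomputable def expect2 (n : ℕ) (α : Edge n → Edge n → ℝ) (h : Edge n → ℝ)
    (f : (Edge n → Fin 2) → (Edge n → Fin 2) → ℝ) : ℝ :=
  ∑ x : Edge n → Fin 2, ∑ y : Edge n → Fin 2, f x y * (gibbs n α h x * gibbs n α h y)

/-- `z_C = Π_{i ∈ C} (x_i - y_i)`. -/
noncomputable def zProd {n : ℕ} (C : Finset (Edge n)) (x y : Edge n → Fin 2) : ℝ :=
  ∏ i ∈ C, (((x i : ℕ) : ℝ) - ((y i : ℕ) : ℝ))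

/-- `v_D = Π_{i ∈ D} (x_i + y_i)/2`. -/
noncomputable def vProd {n : ℕ} (D : Finset (Edge n)) (x y : Edge n → Fin 2) : ℝ :=
  ∏ i ∈ D, ((((x i : ℕ) : ℝ) + ((y i : ℕ) : ℝ)) / 2)


namespace DupZV

variable {V : Type*} [Fintype V] [DecidableEq V]

abbrev Conf (V : Type*) := V → Fin 2

abbrev Q (V : Type*) := Conf V × Conf V × Conf V × Conf V

def R (u : Fin 2) : ℝ := ((u : ℕ) : ℝ)

abbrev T4 := Fin 2 × Fin 2 × Fin 2 × Fin 2

def ga (t : T4) : ℝ := R t.1 + R t.2.1 + R t.2.2.1 + R t.2.2.2 - 2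
def gb (t : T4) : ℝ := R t.1 + R t.2.1 - R t.2.2.1 - R t.2.2.2
def gc (t : T4) : ℝ := R t.1 - R t.2.1 + R t.2.2.1 - R t.2.2.2
def gd (t : T4) : ℝ := R t.1 - R t.2.1 - R t.2.2.1 + R t.2.2.2

def site (ω : Q V) (i : V) : T4 := (ω.1 i, ω.2.1 i, ω.2.2.1 i, ω.2.2.2 i)

noncomputable def mono (p q r s : V → ℕ) (ω : Q V) : ℝ :=
  ∏ i : V, (ga (site ω i) ^ p i * gb (site ω i) ^ q i * gc (site ω i) ^ r i *
    gd (site ω i) ^ s i)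

noncomputable def msite (p q r s : ℕ) : ℝ :=
  ∑ t : T4, ga t ^ p * gb t ^ q * gc t ^ r * gd t ^ s

def qEquiv : Q V ≃ (V → T4) where
  toFun ω := fun i => site ω i
  invFun g := (fun i => (g i).1, fun i => (g i).2.1, fun i => (g i).2.2.1, fun i => (g i).2.2.2)
  left_inv ω := rfl
  right_inv g := rfl

lemma sum_mono (p q r s : V → ℕ) :
    ∑ ω : Q V, mono p q r s ω = ∏ i : V, msite (p i) (q i) (r i) (s i) := by
  rw [← Equiv.sum_comp (qEquiv (V := V)).symm (mono p q r s)]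
  have h1 : ∀ g : V → T4, mono p q r s ((qEquiv (V := V)).symm g)
      = ∏ i, (ga (g i) ^ p i * gb (g i) ^ q i * gc (g i) ^ r i * gd (g i) ^ s i) :=
    fun g => rfl
  simp only [h1]
  have h2 : (∏ i : V, msite (p i) (q i) (r i) (s i))
      = ∑ x ∈ Fintype.piFinset (fun _ : V => (univ : Finset T4)),
        ∏ i, (ga (x i) ^ p i * gb (x i) ^ q i * gc (x i) ^ r i * gd (x i) ^ s i) := by
    simp only [msite]
    rw [Finset.prod_univ_sum]
  rw [h2, Fintype.piFinset_univ]

lemma msite_eq (p q r s : ℕ) : msite p q r s =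
    2 ^ p * 0 ^ q * 0 ^ r * 0 ^ s + 0 ^ p * 2 ^ q * 0 ^ r * 0 ^ s
  + 0 ^ p * (-2) ^ q * 0 ^ r * 0 ^ s + (-2) ^ p * 0 ^ q * 0 ^ r * 0 ^ s
  + 0 ^ p * 0 ^ q * 2 ^ r * 0 ^ s + 0 ^ p * 0 ^ q * 0 ^ r * 2 ^ s
  + 0 ^ p * 0 ^ q * 0 ^ r * (-2) ^ s + 0 ^ p * 0 ^ q * (-2) ^ r * 0 ^ s
  + (-1) ^ s + (-1) ^ r + (-1) ^ p * (-1) ^ q * (-1) ^ s + (-1) ^ p * (-1) ^ q * (-1) ^ r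
  + (-1) ^ q + (-1) ^ p + (-1) ^ q * (-1) ^ r * (-1) ^ s + (-1) ^ p * (-1) ^ r * (-1) ^ s := by
  simp only [msite, Fintype.sum_prod_type, Fin.sum_univ_two, ga, gb, gc, gd, R]
  norm_num
  ring
lemma msite_nonneg (p q r s : ℕ) (hq : Even q) : 0 ≤ msite p q r s := by
  rw [msite_eq]
  rcases Nat.even_or_odd p with hp|hp <;> rcases Nat.even_or_odd r with hr|hr <;>
    rcases Nat.even_or_odd s with hs|hs <;>
    simp only [hq.neg_pow, hp.neg_pow, hr.neg_pow, hs.neg_pow, one_pow, mul_one, one_mul,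
      mul_neg, neg_mul, neg_neg] <;>
    [skip; rw [zero_pow hs.pos.ne']; rw [zero_pow hr.pos.ne'];
     rw [zero_pow hr.pos.ne', zero_pow hs.pos.ne'];
     rw [zero_pow hp.pos.ne']; rw [zero_pow hp.pos.ne', zero_pow hs.pos.ne'];
     rw [zero_pow hp.pos.ne', zero_pow hr.pos.ne'];
     rw [zero_pow hp.pos.ne', zero_pow hr.pos.ne', zero_pow hs.pos.ne']] <;>
    ring_nf <;>
    positivity
lemma msite_nonpos (p q r s : ℕ) (hq : Odd q) : msite p q r s ≤ 0 := by
  rw [msite_eq, zero_pow hq.pos.ne']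
  rcases Nat.even_or_odd p with hp|hp <;> rcases Nat.even_or_odd r with hr|hr <;>
    rcases Nat.even_or_odd s with hs|hs <;>
    simp only [hq.neg_pow, hp.neg_pow, hr.neg_pow, hs.neg_pow, one_pow, mul_one, one_mul,
      mul_neg, neg_mul, neg_neg, mul_zero, zero_mul] <;>
    [skip; rw [zero_pow hs.pos.ne']; rw [zero_pow hr.pos.ne'];
     rw [zero_pow hr.pos.ne', zero_pow hs.pos.ne'];
     rw [zero_pow hp.pos.ne']; rw [zero_pow hp.pos.ne', zero_pow hs.pos.ne'];
     rw [zero_pow hp.pos.ne', zero_pow hr.pos.ne'];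
     rw [zero_pow hp.pos.ne', zero_pow hr.pos.ne', zero_pow hs.pos.ne']] <;>
    ring_nf
  all_goals norm_num
  all_goals positivity


end DupZV
namespace DupZV
variable {V : Type*} [Fintype V] [DecidableEq V]

lemma prod_nonpos_of_odd_card {s : Finset V} {f : V → ℝ} (hcard : Odd s.card)
    (hf : ∀ i ∈ s, f i ≤ 0) : ∏ i ∈ s, f i ≤ 0 := by
  have h1 : ∏ i ∈ s, f i = (-1) ^ s.card * ∏ i ∈ s, (-f i) := by
    rw [← Finset.prod_const, ← Finset.prod_mul_distrib]
    exact Finset.prod_congr rfl fun i _ => by ring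
  rw [h1, hcard.neg_one_pow, neg_one_mul, neg_nonpos]
  exact Finset.prod_nonneg fun i hi => neg_nonneg.mpr (hf i hi)

lemma freeSum_nonpos (p q r s : V → ℕ) (hq : Odd (∑ i, q i)) :
    ∑ ω : Q V, mono p q r s ω ≤ 0 := by
  rw [sum_mono]
  rw [← Finset.prod_filter_mul_prod_filter_not univ (fun i => Odd (q i))]
  have h1 : ∏ i ∈ univ.filter (fun i => Odd (q i)), msite (p i) (q i) (r i) (s i) ≤ 0 := by
    apply prod_nonpos_of_odd_card
    · exact (Finset.odd_sum_iff_odd_card_odd q).mp hq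
    · exact fun i hi => msite_nonpos _ _ _ _ (Finset.mem_filter.mp hi).2
  have h2 : (0:ℝ) ≤ ∏ i ∈ univ.filter (fun i => ¬ Odd (q i)), msite (p i) (q i) (r i) (s i) :=
    Finset.prod_nonneg fun i hi =>
      msite_nonneg _ _ _ _ (Nat.not_odd_iff_even.mp (Finset.mem_filter.mp hi).2)
  exact mul_nonpos_iff.mpr (Or.inr ⟨h1, h2⟩)

/-- Generators of the cone: nonnegative multiples of monomials whose total `b`-degree has
parity given by `b`. -/
def Gen (V : Type*) [Fintype V] (b : Bool) : Set (Q V → ℝ) :=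
  {f | ∃ (t : ℝ) (p q r s : V → ℕ), 0 ≤ t ∧ (∑ i, q i) % 2 = (cond b 1 0) ∧
    f = fun ω => t * mono p q r s ω}

lemma mono_mul (p q r s p' q' r' s' : V → ℕ) (ω : Q V) :
    mono p q r s ω * mono p' q' r' s' ω = mono (p+p') (q+q') (r+r') (s+s') ω := by
  unfold mono
  rw [← Finset.prod_mul_distrib]
  exact Finset.prod_congr rfl fun i _ => by simp only [Pi.add_apply, pow_add]; ring

lemma gen_mul {b b' : Bool} {f g : Q V → ℝ} (hf : f ∈ Gen V b) (hg : g ∈ Gen V b') :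
    (fun ω => f ω * g ω) ∈ Gen V (b ^^ b') := by
  obtain ⟨t, p, q, r, s, ht, hpar, rfl⟩ := hf
  obtain ⟨t', p', q', r', s', ht', hpar', rfl⟩ := hg
  refine ⟨t * t', p + p', q + q', r + r', s + s', mul_nonneg ht ht', ?_, ?_⟩
  · have : ∑ i, (q + q') i = (∑ i, q i) + ∑ i, q' i := by
      simp [Finset.sum_add_distrib]
    rw [this, Nat.add_mod, hpar, hpar']
    cases b <;> cases b' <;> rfl
  · funext ω
    rw [← mono_mul]
    ring

lemma cone_mul {b b' : Bool} {f g : Q V → ℝ}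
    (hf : f ∈ AddSubmonoid.closure (Gen V b)) (hg : g ∈ AddSubmonoid.closure (Gen V b')) :
    (fun ω => f ω * g ω) ∈ AddSubmonoid.closure (Gen V (b ^^ b')) := by
  induction hg using AddSubmonoid.closure_induction with
  | mem g hgen =>
    induction hf using AddSubmonoid.closure_induction with
    | mem f hfgen => exact AddSubmonoid.subset_closure (gen_mul hfgen hgen)
    | zero =>
      have : (fun ω => (0 : Q V → ℝ) ω * g ω) = 0 := by funext ω; simp
      rw [this]; exact zero_mem _
    | add f f' _ _ ihf ihf' =>
      have : (fun ω => (f + f') ω * g ω) =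
          (fun ω => f ω * g ω) + fun ω => f' ω * g ω := by
        funext ω; simp [add_mul]
      rw [this]; exact add_mem ihf ihf'
  | zero =>
    have : (fun ω => f ω * (0 : Q V → ℝ) ω) = 0 := by funext ω; simp
    rw [this]; exact zero_mem _
  | add g g' _ _ ihg ihg' =>
    have : (fun ω => f ω * (g + g') ω) =
        (fun ω => f ω * g ω) + fun ω => f ω * g' ω := by
      funext ω; simp [mul_add]
    rw [this]; exact add_mem ihg ihg'

lemma cone_one : (fun _ : Q V => (1:ℝ)) ∈ AddSubmonoid.closure (Gen V false) := by
  apply AddSubmonoid.subset_closure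
  exact ⟨1, 0, 0, 0, 0, zero_le_one, by simp, by funext ω; simp [mono]⟩

lemma cone_pow {g : Q V → ℝ} (hg : g ∈ AddSubmonoid.closure (Gen V false)) (k : ℕ) :
    (fun ω => g ω ^ k) ∈ AddSubmonoid.closure (Gen V false) := by
  induction k with
  | zero => simpa using cone_one
  | succ k ih =>
    have : (fun ω => g ω ^ (k+1)) = fun ω => (fun ω => g ω ^ k) ω * g ω := by
      funext ω; rw [pow_succ]
    rw [this]
    exact cone_mul (b := false) (b' := false) ih hg

lemma cone_sum_nonpos {f : Q V → ℝ} (hf : f ∈ AddSubmonoid.closure (Gen V true)) :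
    ∑ ω : Q V, f ω ≤ 0 := by
  induction hf using AddSubmonoid.closure_induction with
  | mem f hgen =>
    obtain ⟨t, p, q, r, s, ht, hpar, rfl⟩ := hgen
    rw [← Finset.mul_sum]
    exact mul_nonpos_iff.mpr (Or.inl ⟨ht, freeSum_nonpos p q r s (Nat.odd_iff.mpr hpar)⟩)
  | zero => simp
  | add f f' _ _ ih ih' =>
    have : ∑ ω : Q V, (f + f') ω = (∑ ω : Q V, f ω) + ∑ ω : Q V, f' ω := by
      simp [Finset.sum_add_distrib]
    rw [this]; exact add_nonpos ih ih'

end DupZV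
namespace DupZV
variable {V : Type*} [Fintype V] [DecidableEq V]

def fA (i : V) (ω : Q V) : ℝ := ga (site ω i)
def fB (i : V) (ω : Q V) : ℝ := gb (site ω i)
def fC (i : V) (ω : Q V) : ℝ := gc (site ω i)
def fD (i : V) (ω : Q V) : ℝ := gd (site ω i)

/-- indicator exponent function of a finset -/
def indE (s : Finset V) : V → ℕ := fun j => if j ∈ s then 1 else 0

lemma sum_indE (s : Finset V) : ∑ i, indE s i = s.card := by
  simp [indE, Finset.sum_ite_mem]

lemma prod_pow_indE (s : Finset V) (f : V → ℝ) :
    ∏ j : V, f j ^ indE s j = ∏ j ∈ s, f j := by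
  rw [← Finset.prod_filter_mul_prod_filter_not univ (· ∈ s)]
  have h1 : ∀ j ∈ univ.filter (· ∈ s), f j ^ indE s j = f j := by
    intro j hj; simp [indE, (Finset.mem_filter.mp hj).2]
  have h2 : ∀ j ∈ univ.filter (¬ · ∈ s), f j ^ indE s j = 1 := by
    intro j hj; simp [indE, (Finset.mem_filter.mp hj).2]
  rw [Finset.prod_congr rfl h1, Finset.prod_congr rfl h2, Finset.prod_const_one, mul_one]
  congr 1
  ext j; simp

lemma mono_ind (u t u' t' : Finset V) (ω : Q V) :
    mono (indE u) (indE t) (indE u') (indE t') ω =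
    (∏ i ∈ u, fA i ω) * (∏ i ∈ t, fB i ω) * (∏ i ∈ u', fC i ω) * ∏ i ∈ t', fD i ω := by
  unfold mono
  rw [← prod_pow_indE u (fun j => fA j ω), ← prod_pow_indE t (fun j => fB j ω),
    ← prod_pow_indE u' (fun j => fC j ω), ← prod_pow_indE t' (fun j => fD j ω),
    ← Finset.prod_mul_distrib, ← Finset.prod_mul_distrib, ← Finset.prod_mul_distrib]
  rfl

end DupZV
namespace DupZV
variable {V : Type*} [Fintype V] [DecidableEq V]

noncomputable def Hgen (K : V → V → ℝ) (h : V → ℝ) (x : Conf V) : ℝ :=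
  ∑ i : V, ∑ j : V, K i j * R (x i) * R (x j) + ∑ i : V, h i * R (x i)

noncomputable def G0 (K : V → V → ℝ) (h : V → ℝ) : Q V → ℝ :=
  (∑ i : V, ∑ j : V, fun ω => K i j * ((fA i ω + fA j ω) / 2 +
     (fA i ω * fA j ω + fB i ω * fB j ω + fC i ω * fC j ω + fD i ω * fD j ω) / 4))
  + ∑ i : V, fun ω => h i * fA i ω

lemma sum4 (f g h' k : V → ℝ) :
    (∑ i, f i) + (∑ i, g i) + (∑ i, h' i) + (∑ i, k i) = ∑ i, (f i + g i + h' i + k i) := by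
  simp [Finset.sum_add_distrib]

lemma sum2 (f g : V → ℝ) : (∑ i, f i) + (∑ i, g i) = ∑ i, (f i + g i) :=
  Finset.sum_add_distrib.symm

lemma H4_eq (K : V → V → ℝ) (h : V → ℝ) (ω : Q V) :
    Hgen K h ω.1 + Hgen K h ω.2.1 + Hgen K h ω.2.2.1 + Hgen K h ω.2.2.2
      = (∑ i : V, ∑ j : V, K i j + ∑ i : V, 2 * h i) + G0 K h ω := by
  obtain ⟨x, y, x', y'⟩ := ω
  have rearr : ∀ a b c d e f g h : ℝ,
      (a+b)+(c+d)+(e+f)+(g+h) = (a+c+e+g)+(b+d+f+h) := fun a b c d e f g h => by ring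
  have rearr2 : ∀ a b c d : ℝ, (a+b)+(c+d) = (a+c)+(b+d) := fun a b c d => by ring
  simp only [Hgen, G0, Finset.sum_apply, Pi.add_apply]
  rw [rearr, rearr2]
  simp only [sum4, sum2]
  refine Finset.sum_congr rfl fun i _ => ?_
  rw [rearr2, sum2, rearr2, sum2]
  congr 1
  · refine Finset.sum_congr rfl fun j _ => ?_
    simp only [fA, fB, fC, fD, ga, gb, gc, gd, site]
    ring
  · simp only [fA, ga, site]
    ring
end DupZV
namespace DupZV
variable {V : Type*} [Fintype V] [DecidableEq V]

lemma gen_fA (t : ℝ) (ht : 0 ≤ t) (i : V) : (fun ω => t * fA i ω) ∈ Gen V false :=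
  ⟨t, indE {i}, indE ∅, indE ∅, indE ∅, ht, by simp [sum_indE], by
    funext ω; rw [mono_ind]; simp⟩

lemma gen_fAA (t : ℝ) (ht : 0 ≤ t) (i j : V) :
    (fun ω => t * (fA i ω * fA j ω)) ∈ Gen V false :=
  ⟨t, indE {i} + indE {j}, indE ∅ + indE ∅, indE ∅ + indE ∅, indE ∅ + indE ∅, ht,
   by simp [Finset.sum_add_distrib, sum_indE], by
    funext ω; rw [← mono_mul, mono_ind, mono_ind]; simp⟩

lemma gen_fBB (t : ℝ) (ht : 0 ≤ t) (i j : V) :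
    (fun ω => t * (fB i ω * fB j ω)) ∈ Gen V false :=
  ⟨t, indE ∅ + indE ∅, indE {i} + indE {j}, indE ∅ + indE ∅, indE ∅ + indE ∅, ht,
   by simp [Finset.sum_add_distrib, sum_indE], by
    funext ω; rw [← mono_mul, mono_ind, mono_ind]; simp⟩

lemma gen_fCC (t : ℝ) (ht : 0 ≤ t) (i j : V) :
    (fun ω => t * (fC i ω * fC j ω)) ∈ Gen V false :=
  ⟨t, indE ∅ + indE ∅, indE ∅ + indE ∅, indE {i} + indE {j}, indE ∅ + indE ∅, ht,
   by simp [Finset.sum_add_distrib, sum_indE], by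
    funext ω; rw [← mono_mul, mono_ind, mono_ind]; simp⟩

lemma gen_fDD (t : ℝ) (ht : 0 ≤ t) (i j : V) :
    (fun ω => t * (fD i ω * fD j ω)) ∈ Gen V false :=
  ⟨t, indE ∅ + indE ∅, indE ∅ + indE ∅, indE ∅ + indE ∅, indE {i} + indE {j}, ht,
   by simp [Finset.sum_add_distrib, sum_indE], by
    funext ω; rw [← mono_mul, mono_ind, mono_ind]; simp⟩

lemma G0_mem (K : V → V → ℝ) (hK : ∀ i j, 0 ≤ K i j) (h : V → ℝ) (hh : ∀ i, 0 ≤ h i) :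
    G0 K h ∈ AddSubmonoid.closure (Gen V false) := by
  unfold G0
  apply add_mem
  · apply sum_mem; intro i _
    apply sum_mem; intro j _
    have hd : (fun ω => K i j * ((fA i ω + fA j ω) / 2 +
        (fA i ω * fA j ω + fB i ω * fB j ω + fC i ω * fC j ω + fD i ω * fD j ω) / 4)) =
        (fun ω => (K i j / 2) * fA i ω) + ((fun ω => (K i j / 2) * fA j ω) +
        ((fun ω => (K i j / 4) * (fA i ω * fA j ω)) +
        ((fun ω => (K i j / 4) * (fB i ω * fB j ω)) +
        ((fun ω => (K i j / 4) * (fC i ω * fC j ω)) +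
         (fun ω => (K i j / 4) * (fD i ω * fD j ω)))))) := by
      funext ω; simp only [Pi.add_apply]; ring
    rw [hd]
    have h2 : (0:ℝ) ≤ K i j / 2 := div_nonneg (hK i j) (by norm_num)
    have h4 : (0:ℝ) ≤ K i j / 4 := div_nonneg (hK i j) (by norm_num)
    exact add_mem (AddSubmonoid.subset_closure (gen_fA _ h2 i))
      (add_mem (AddSubmonoid.subset_closure (gen_fA _ h2 j))
      (add_mem (AddSubmonoid.subset_closure (gen_fAA _ h4 i j))
      (add_mem (AddSubmonoid.subset_closure (gen_fBB _ h4 i j))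
      (add_mem (AddSubmonoid.subset_closure (gen_fCC _ h4 i j))
        (AddSubmonoid.subset_closure (gen_fDD _ h4 i j))))))
  · apply sum_mem; intro i _
    exact AddSubmonoid.subset_closure (gen_fA _ (hh i) i)
end DupZV
namespace DupZV
variable {V : Type*} [Fintype V] [DecidableEq V]

lemma prod_neg (s : Finset V) (f : V → ℝ) :
    ∏ i ∈ s, (-(f i)) = (-1) ^ s.card * ∏ i ∈ s, f i := by
  rw [← Finset.prod_const, ← Finset.prod_mul_distrib]
  exact Finset.prod_congr rfl fun i _ => by ring

noncomputable def Fz (C : Finset V) : Q V → ℝ :=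
  fun ω => (∏ i ∈ C, (R (ω.1 i) - R (ω.2.1 i))) - ∏ i ∈ C, (R (ω.2.2.1 i) - R (ω.2.2.2 i))

noncomputable def Fv (D : Finset V) : Q V → ℝ :=
  fun ω => (∏ i ∈ D, ((R (ω.1 i) + R (ω.2.1 i)) / 2))
    - ∏ i ∈ D, ((R (ω.2.2.1 i) + R (ω.2.2.2 i)) / 2)

lemma Fz_eq (C : Finset V) : Fz C = ∑ t ∈ C.powerset,
    (fun ω => ((1 - (-1:ℝ) ^ t.card) / 2 ^ C.card) *
      mono (indE ∅) (indE ∅) (indE (C \ t)) (indE t) ω) := by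
  funext ω
  simp only [Finset.sum_apply]
  unfold Fz
  have h1 : ∏ i ∈ C, (R (ω.1 i) - R (ω.2.1 i)) = ∏ i ∈ C, (fD i ω / 2 + fC i ω / 2) :=
    Finset.prod_congr rfl fun i _ => by simp only [fC, fD, gc, gd, site]; ring
  have h2 : ∏ i ∈ C, (R (ω.2.2.1 i) - R (ω.2.2.2 i))
      = ∏ i ∈ C, (-(fD i ω / 2) + fC i ω / 2) :=
    Finset.prod_congr rfl fun i _ => by simp only [fC, fD, gc, gd, site]; ring
  rw [h1, h2, Finset.prod_add, Finset.prod_add, ← Finset.sum_sub_distrib]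
  refine Finset.sum_congr rfl fun t ht => ?_
  rw [mono_ind]
  have hcard : (C \ t).card + t.card = C.card :=
    Finset.card_sdiff_add_card_eq_card (Finset.mem_powerset.mp ht)
  have e1 : ∏ i ∈ t, (fD i ω / 2) = (∏ i ∈ t, fD i ω) / 2 ^ t.card := by
    rw [Finset.prod_div_distrib, Finset.prod_const]
  have e2 : ∏ i ∈ t, (-(fD i ω / 2)) = (-1) ^ t.card * ((∏ i ∈ t, fD i ω) / 2 ^ t.card) := by
    rw [prod_neg, e1]
  have e3 : ∏ i ∈ C \ t, (fC i ω / 2) = (∏ i ∈ C \ t, fC i ω) / 2 ^ (C \ t).card := by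
    rw [Finset.prod_div_distrib, Finset.prod_const]
  rw [e1, e2, e3, ← hcard, pow_add, Finset.prod_empty]
  have h2a : (2:ℝ) ^ t.card ≠ 0 := by positivity
  have h2b : (2:ℝ) ^ (C \ t).card ≠ 0 := by positivity
  field_simp
  ring

lemma neg_one_pow_le_one (n : ℕ) : (-1:ℝ) ^ n ≤ 1 := by
  rcases Nat.even_or_odd n with h | h
  · rw [h.neg_pow, one_pow]
  · rw [h.neg_pow, one_pow]; norm_num

lemma Fz_mem (C : Finset V) : Fz C ∈ AddSubmonoid.closure (Gen V false) := by
  rw [Fz_eq]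
  apply sum_mem
  intro t ht
  apply AddSubmonoid.subset_closure
  refine ⟨_, _, _, _, _, ?_, by simp [sum_indE], rfl⟩
  have := neg_one_pow_le_one t.card
  have h2 : (0:ℝ) < 2 ^ C.card := by positivity
  exact div_nonneg (by linarith) (le_of_lt h2)

lemma Fv_eq (D : Finset V) : Fv D = ∑ T ∈ D.powerset, ∑ B ∈ (D \ T).powerset,
    (fun ω => ((1 - (-1:ℝ) ^ T.card) * (1/2) ^ ((D \ T) \ B).card /
        (4 ^ T.card * 4 ^ B.card)) *
      mono (indE B) (indE T) (indE ∅) (indE ∅) ω) := by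
  funext ω
  simp only [Finset.sum_apply]
  unfold Fv
  have h1 : ∏ i ∈ D, ((R (ω.1 i) + R (ω.2.1 i)) / 2)
      = ∏ i ∈ D, (fB i ω / 4 + (2 + fA i ω) / 4) :=
    Finset.prod_congr rfl fun i _ => by simp only [fA, fB, ga, gb, site]; ring
  have h2 : ∏ i ∈ D, ((R (ω.2.2.1 i) + R (ω.2.2.2 i)) / 2)
      = ∏ i ∈ D, (-(fB i ω / 4) + (2 + fA i ω) / 4) :=
    Finset.prod_congr rfl fun i _ => by simp only [fA, fB, ga, gb, site]; ring
  rw [h1, h2, Finset.prod_add, Finset.prod_add, ← Finset.sum_sub_distrib]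
  refine Finset.sum_congr rfl fun T hT => ?_
  have hexp : ∏ i ∈ D \ T, ((2 + fA i ω) / 4) = ∏ i ∈ D \ T, (fA i ω / 4 + 1/2) :=
    Finset.prod_congr rfl fun i _ => by ring
  rw [hexp, Finset.prod_add, Finset.mul_sum, Finset.mul_sum, ← Finset.sum_sub_distrib]
  refine Finset.sum_congr rfl fun B hB => ?_
  rw [mono_ind]
  have e1 : ∏ i ∈ T, (fB i ω / 4) = (∏ i ∈ T, fB i ω) / 4 ^ T.card := by
    rw [Finset.prod_div_distrib, Finset.prod_const]
  have e2 : ∏ i ∈ T, (-(fB i ω / 4)) = (-1) ^ T.card * ((∏ i ∈ T, fB i ω) / 4 ^ T.card) := by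
    rw [prod_neg, e1]
  have e3 : ∏ i ∈ B, (fA i ω / 4) = (∏ i ∈ B, fA i ω) / 4 ^ B.card := by
    rw [Finset.prod_div_distrib, Finset.prod_const]
  have e4 : ∏ _i ∈ (D \ T) \ B, ((1:ℝ)/2) = (1/2 : ℝ) ^ ((D \ T) \ B).card :=
    Finset.prod_const _
  rw [e1, e2, e3, e4, Finset.prod_empty]
  have h4a : (4:ℝ) ^ T.card ≠ 0 := by positivity
  have h4b : (4:ℝ) ^ B.card ≠ 0 := by positivity
  field_simp
  ring

lemma Fv_mem (D : Finset V) : Fv D ∈ AddSubmonoid.closure (Gen V true) := by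
  rw [Fv_eq]
  apply sum_mem
  intro T hT
  by_cases hodd : Odd T.card
  · apply sum_mem
    intro B hB
    apply AddSubmonoid.subset_closure
    refine ⟨_, _, _, _, _, ?_, by simp [sum_indE, Nat.odd_iff.mp hodd], rfl⟩
    rw [hodd.neg_pow, one_pow]
    positivity
  · have hz : ∑ B ∈ (D \ T).powerset,
        (fun ω => ((1 - (-1:ℝ) ^ T.card) * (1/2) ^ ((D \ T) \ B).card /
          (4 ^ T.card * 4 ^ B.card)) *
          mono (indE B) (indE T) (indE ∅) (indE ∅) ω) = (0 : Q V → ℝ) := by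
      apply Finset.sum_eq_zero
      intro B hB
      funext ω
      rw [(Nat.not_odd_iff_even.mp hodd).neg_pow, one_pow, sub_self]
      simp
    rw [hz]
    exact zero_mem _
end DupZV
namespace DupZV
variable {V : Type*} [Fintype V] [DecidableEq V]

lemma sum_mul_exp_nonpos {F G : Q V → ℝ} (hF : F ∈ AddSubmonoid.closure (Gen V true))
    (hG : G ∈ AddSubmonoid.closure (Gen V false)) :
    ∑ ω : Q V, F ω * Real.exp (G ω) ≤ 0 := by
  have hsum : ∀ ω : Q V, Summable (fun k : ℕ => F ω * (G ω ^ k / (Nat.factorial k))) :=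
    fun ω => (Real.summable_pow_div_factorial (G ω)).mul_left (F ω)
  have h1 : ∀ ω : Q V, F ω * Real.exp (G ω)
      = ∑' k : ℕ, F ω * (G ω ^ k / (Nat.factorial k)) := by
    intro ω
    rw [Real.exp_eq_exp_ℝ, NormedSpace.exp_eq_tsum_div, tsum_mul_left]
  calc ∑ ω : Q V, F ω * Real.exp (G ω)
      = ∑ ω : Q V, ∑' k : ℕ, F ω * (G ω ^ k / (Nat.factorial k)) :=
        Finset.sum_congr rfl fun ω _ => h1 ω
    _ = ∑' k : ℕ, ∑ ω : Q V, F ω * (G ω ^ k / (Nat.factorial k)) :=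
        (Summable.tsum_finsetSum fun ω _ => hsum ω).symm
    _ ≤ 0 := by
        apply tsum_nonpos
        intro k
        have hmem : (fun ω => F ω * G ω ^ k) ∈ AddSubmonoid.closure (Gen V true) := by
          have := cone_mul (b := true) (b' := false) hF (cone_pow hG k)
          simpa using this
        have hle := cone_sum_nonpos hmem
        have he : ∑ ω : Q V, F ω * (G ω ^ k / (Nat.factorial k))
            = (∑ ω : Q V, F ω * G ω ^ k) * (1 / (Nat.factorial k)) := by
          rw [Finset.sum_mul]
          exact Finset.sum_congr rfl fun ω _ => by ring
        rw [he]
        have : (0:ℝ) ≤ 1 / (Nat.factorial k) := by positivity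
        exact mul_nonpos_iff.mpr (Or.inr ⟨hle, this⟩)

theorem main_ineq (K : V → V → ℝ) (hK : ∀ i j, 0 ≤ K i j) (h : V → ℝ) (hh : ∀ i, 0 ≤ h i)
    (C D : Finset V) :
    ∑ ω : Q V, (Fz C ω * Fv D ω) *
      Real.exp (Hgen K h ω.1 + Hgen K h ω.2.1 + Hgen K h ω.2.2.1 + Hgen K h ω.2.2.2) ≤ 0 := by
  have hFm : (fun ω => Fz C ω * Fv D ω) ∈ AddSubmonoid.closure (Gen V true) := by
    have := cone_mul (b := false) (b' := true) (Fz_mem C) (Fv_mem D)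
    simpa using this
  have key := sum_mul_exp_nonpos hFm (G0_mem K hK h hh)
  calc ∑ ω : Q V, (Fz C ω * Fv D ω) *
        Real.exp (Hgen K h ω.1 + Hgen K h ω.2.1 + Hgen K h ω.2.2.1 + Hgen K h ω.2.2.2)
      = ∑ ω : Q V, ((Fz C ω * Fv D ω) * Real.exp (G0 K h ω)) *
          Real.exp (∑ i : V, ∑ j : V, K i j + ∑ i : V, 2 * h i) := by
        refine Finset.sum_congr rfl fun ω _ => ?_
        rw [H4_eq, Real.exp_add]
        ring
    _ = (∑ ω : Q V, (Fz C ω * Fv D ω) * Real.exp (G0 K h ω)) *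
          Real.exp (∑ i : V, ∑ j : V, K i j + ∑ i : V, 2 * h i) := by rw [Finset.sum_mul]
    _ ≤ 0 := mul_nonpos_iff.mpr (Or.inr ⟨key, (Real.exp_pos _).le⟩)
end DupZV
namespace DupZV
variable {V : Type*} [Fintype V] [DecidableEq V]

lemma sum_Q_factor (f g : Conf V → Conf V → ℝ) :
    ∑ ω : Q V, f ω.1 ω.2.1 * g ω.2.2.1 ω.2.2.2
      = (∑ x : Conf V, ∑ y : Conf V, f x y) * (∑ x : Conf V, ∑ y : Conf V, g x y) := by
  simp only [Fintype.sum_prod_type, ← Finset.mul_sum, ← Finset.sum_mul]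
end DupZV
/-- Proposition 3.12, Eq. (3.24): if `α ≥ 0` on wedges and `h ≥ 0`
on edges, then under the duplicated measure `E(z_C v_D) ≤ E(z_C) E(v_D)`. -/
theorem duplicate_zv_correlation (n : ℕ) (hn : 2 ≤ n)
    (α : Edge n → Edge n → ℝ) (h : Edge n → ℝ)
    (hsym : ∀ i j, α i j = α j i)
    (hα : ∀ i j, EdgeAdj i j → 0 ≤ α i j)
    (hh : ∀ i, 0 ≤ h i)
    (C D : Finset (Edge n)) :
    expect2 n α h (fun x y => zProd C x y * vProd D x y) ≤
      expect2 n α h (zProd C) * expect2 n α h (vProd D) := by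
  classical
  set Kc : Edge n → Edge n → ℝ :=
    fun i j => (1 / (2 * (n : ℝ))) * (if EdgeAdj i j then α i j else 0) with hKcdef
  have hKc : ∀ i j, 0 ≤ Kc i j := by
    intro i j
    rw [hKcdef]
    by_cases hij : EdgeAdj i j
    · simp only [hij, if_true]
      exact mul_nonneg (by positivity) (hα i j hij)
    · simp [hij]
  have hHam : ∀ x, Ham n α h x = DupZV.Hgen Kc h x := by
    intro x
    unfold Ham DupZV.Hgen DupZV.R
    rw [Finset.mul_sum]
    congr 1
    refine Finset.sum_congr rfl fun i _ => ?_
    rw [Finset.mul_sum]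
    refine Finset.sum_congr rfl fun j _ => ?_
    by_cases hij : EdgeAdj i j
    · simp only [hKcdef, hij, if_true]; ring
    · simp [hKcdef, hij]
  set E : (Edge n → Fin 2) → ℝ := fun x => Real.exp (DupZV.Hgen Kc h x) with hEdef
  set Zq : ℝ := ∑ x : Edge n → Fin 2, E x with hZqdef
  have hZq : 0 < Zq := Finset.sum_pos (fun x _ => Real.exp_pos _) Finset.univ_nonempty
  set Sq : ((Edge n → Fin 2) → (Edge n → Fin 2) → ℝ) → ℝ :=
    fun f => ∑ x : Edge n → Fin 2, ∑ y : Edge n → Fin 2, f x y * (E x * E y) with hSqdef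
  have hexp : ∀ f, expect2 n α h f = Sq f / Zq ^ 2 := by
    intro f
    unfold expect2 gibbs Zpart
    simp only [hHam]
    have step : ∀ x y : Edge n → Fin 2,
        f x y * (E x / Zq * (E y / Zq)) = f x y * (E x * E y) / Zq ^ 2 := fun x y => by
      rw [sq]; ring
    refine Eq.trans (Finset.sum_congr rfl fun x _ => Finset.sum_congr rfl fun y _ => step x y) ?_
    simp only [← Finset.sum_div]
    rfl
  have hZZ : ∑ x : Edge n → Fin 2, ∑ y : Edge n → Fin 2, E x * E y = Zq * Zq := by
    rw [hZqdef, Finset.sum_mul_sum]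
  -- the four factorizations
  have h1 : ∑ ω : DupZV.Q (Edge n),
      ((zProd C ω.1 ω.2.1 * vProd D ω.1 ω.2.1) * (E ω.1 * E ω.2.1)) *
        (E ω.2.2.1 * E ω.2.2.2)
      = Sq (fun x y => zProd C x y * vProd D x y) * (Zq * Zq) := by
    rw [DupZV.sum_Q_factor (fun x y => (zProd C x y * vProd D x y) * (E x * E y))
      (fun x y => E x * E y), hZZ]
  have h2 : ∑ ω : DupZV.Q (Edge n),
      ((zProd C ω.1 ω.2.1 * (E ω.1 * E ω.2.1)) *
        (vProd D ω.2.2.1 ω.2.2.2 * (E ω.2.2.1 * E ω.2.2.2)))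
      = Sq (zProd C) * Sq (vProd D) := by
    rw [DupZV.sum_Q_factor (fun x y => zProd C x y * (E x * E y))
      (fun x y => vProd D x y * (E x * E y))]
  have h3 : ∑ ω : DupZV.Q (Edge n),
      ((vProd D ω.1 ω.2.1 * (E ω.1 * E ω.2.1)) *
        (zProd C ω.2.2.1 ω.2.2.2 * (E ω.2.2.1 * E ω.2.2.2)))
      = Sq (vProd D) * Sq (zProd C) := by
    rw [DupZV.sum_Q_factor (fun x y => vProd D x y * (E x * E y))
      (fun x y => zProd C x y * (E x * E y))]
  have h4 : ∑ ω : DupZV.Q (Edge n),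
      ((E ω.1 * E ω.2.1) *
        ((zProd C ω.2.2.1 ω.2.2.2 * vProd D ω.2.2.1 ω.2.2.2) * (E ω.2.2.1 * E ω.2.2.2)))
      = (Zq * Zq) * Sq (fun x y => zProd C x y * vProd D x y) := by
    rw [DupZV.sum_Q_factor (fun x y => E x * E y)
      (fun x y => (zProd C x y * vProd D x y) * (E x * E y)), hZZ]
  have hmain := DupZV.main_ineq Kc hKc h hh C D
  have hsplit : ∑ ω : DupZV.Q (Edge n), (DupZV.Fz C ω * DupZV.Fv D ω) *
      Real.exp (DupZV.Hgen Kc h ω.1 + DupZV.Hgen Kc h ω.2.1 +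
        DupZV.Hgen Kc h ω.2.2.1 + DupZV.Hgen Kc h ω.2.2.2)
      = Sq (fun x y => zProd C x y * vProd D x y) * (Zq * Zq)
        - Sq (zProd C) * Sq (vProd D) - Sq (vProd D) * Sq (zProd C)
        + (Zq * Zq) * Sq (fun x y => zProd C x y * vProd D x y) := by
    rw [← h1, ← h2, ← h3, ← h4]
    rw [← Finset.sum_sub_distrib, ← Finset.sum_sub_distrib, ← Finset.sum_add_distrib]
    refine Finset.sum_congr rfl fun ω _ => ?_
    have hFz : DupZV.Fz C ω = zProd C ω.1 ω.2.1 - zProd C ω.2.2.1 ω.2.2.2 := rfl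
    have hFv : DupZV.Fv D ω = vProd D ω.1 ω.2.1 - vProd D ω.2.2.1 ω.2.2.2 := rfl
    rw [hFz, hFv, Real.exp_add, Real.exp_add, Real.exp_add]
    simp only [hEdef]
    ring
  rw [hsplit] at hmain
  have hkey : Sq (fun x y => zProd C x y * vProd D x y) * (Zq * Zq)
      ≤ Sq (zProd C) * Sq (vProd D) := by linarith
  rw [hexp, hexp, hexp, div_mul_div_comm, div_le_div_iff₀ (by positivity) (by positivity)]
  calc Sq (fun x y => zProd C x y * vProd D x y) * (Zq ^ 2 * Zq ^ 2)
      = (Sq (fun x y => zProd C x y * vProd D x y) * (Zq * Zq)) * Zq ^ 2 := by ring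
    _ ≤ (Sq (zProd C) * Sq (vProd D)) * Zq ^ 2 :=
        mul_le_mul_of_nonneg_right hkey (by positivity)
end

section
/- Let H be a finite simple graph and let G_1, G_2 be simple graphs on the same finite vertex set V. Then the number of graph homomorphisms from H is supermodular with respect to union and intersection of edge sets: hom(H, G_1 ⊔ G_2) + hom(H, G_1 ⊓ G_2) ≥ hom(H, G_1) + hom(H, G_2), where G_1 ⊔ G_2 (resp. G_1 ⊓ G_2) is the graph on V whose edge set is the union (resp. intersection) of the edge sets of G_1 and G_2. -/
/-!
The set of homomorphisms `H → G` is monotone in `G` and turns `G₁ ⊓ G₂` into an intersection,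
so it contains the union of the hom-sets of `G₁` and `G₂` in the hom-set of `G₁ ⊔ G₂`;
inclusion–exclusion for the cardinalities of these finite sets gives supermodularity.
-/

theorem Set.ncard_add_ncard_le_ncard_sup_add_ncard_inf {α β : Type*} [Lattice α]
    {φ : α → Set β} (hφ : Monotone φ) (hφ_inf : ∀ a b, φ (a ⊓ b) = φ a ∩ φ b) (a b : α)
    (hfin : (φ (a ⊔ b)).Finite) :
    (φ a).ncard + (φ b).ncard ≤ (φ (a ⊔ b)).ncard + (φ (a ⊓ b)).ncard := by
  have ha : (φ a).Finite := hfin.subset (hφ le_sup_left)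
  have hb : (φ b).Finite := hfin.subset (hφ le_sup_right)
  have hunion : φ a ∪ φ b ⊆ φ (a ⊔ b) := Set.union_subset (hφ le_sup_left) (hφ le_sup_right)
  calc (φ a).ncard + (φ b).ncard = (φ a ∪ φ b).ncard + (φ a ∩ φ b).ncard :=
        (Set.ncard_union_add_ncard_inter _ _ ha hb).symm
    _ ≤ (φ (a ⊔ b)).ncard + (φ (a ⊓ b)).ncard := by
        rw [hφ_inf]
        exact Nat.add_le_add_right (Set.ncard_le_ncard hunion hfin) _

namespace SimpleGraph

variable {W V : Type*}

def homSet (H : SimpleGraph W) (G : SimpleGraph V) : Set (W → V) :=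
  {f | ∀ a b, H.Adj a b → G.Adj (f a) (f b)}

theorem homSet_mono (H : SimpleGraph W) : Monotone (homSet (V := V) H) :=
  fun _ _ hG _ hf a b hab => hG (hf a b hab)

theorem homSet_inf (H : SimpleGraph W) (G₁ G₂ : SimpleGraph V) :
    homSet H (G₁ ⊓ G₂) = homSet H G₁ ∩ homSet H G₂ := by
  ext f
  simp only [homSet, Set.mem_ofPred_eq, Set.mem_inter_iff, inf_adj, imp_and, forall_and]

end SimpleGraph

/-- the number of graph homomorphisms `hom(H, ·)` is supermodular
with respect to union and intersection of the edge sets of graphs on a common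
finite vertex set `V`. -/
theorem hom_count_supermodular {W V : Type*} [Fintype W] [Fintype V]
    (H : SimpleGraph W) (G₁ G₂ : SimpleGraph V) :
    Nat.card {f : W → V // ∀ a b, H.Adj a b → G₁.Adj (f a) (f b)}
      + Nat.card {f : W → V // ∀ a b, H.Adj a b → G₂.Adj (f a) (f b)}
    ≤ Nat.card {f : W → V // ∀ a b, H.Adj a b → (G₁ ⊔ G₂).Adj (f a) (f b)}
      + Nat.card {f : W → V // ∀ a b, H.Adj a b → (G₁ ⊓ G₂).Adj (f a) (f b)} := by
  have h := Set.ncard_add_ncard_le_ncard_sup_add_ncard_inf (SimpleGraph.homSet_mono H)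
    (SimpleGraph.homSet_inf H) G₁ G₂ (Set.toFinite _)
  simp only [← Nat.card_coe_set_eq] at h
  exact h
end
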